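/- arXiv:1702.07407 — 7 statements merged into one kernel-verified Lean document; each statement's English description precedes it below -/
import Mathlib

section
/- Let α and β be coprime positive integers and set D = β² + 4α²; assume D is not a perfect square. Then the negative Pell equation x² − Dy² = −4 has a solution in integers x, y if and only if there exist a matrix [[t₁,t₂],[t₃,t₄]] ∈ GL₂(ℤ) and integers a, b, c with a dividing b such that αx² + βxy − αy² evaluated at (t₁x+t₂y, t₃x+t₄y) equals ±(ax² + bxy + cy²). -/
/-- Value of the binary quadratic form `a x² + b xy + c y²`. -/
def qdval {R : Type*} [CommRing R] (a b c x y : R) : R :=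
  a*x^2 + b*x*y + c*y^2

/-- Forward key lemma: from an improper automorphism (trace 0, det -1) of the form
`a x² + b xy - a y²` together with a nonzero fixed vector, produce an equivalent
form whose first coefficient divides the middle one. -/
private lemma keyfwd (a b p q r s0 t0 : ℤ)
    (hN : ∀ X Y : ℤ, a*(p*X+q*Y)^2 + b*(p*X+q*Y)*(r*X-p*Y) - a*(r*X-p*Y)^2
        = a*X^2 + b*X*Y - a*Y^2)
    (he1 : p*s0 + q*t0 = s0) (he2 : r*s0 - p*t0 = t0)
    (hne : ¬(s0 = 0 ∧ t0 = 0)) :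
    ∃ t1 t2 t3 t4 a' b' c' : ℤ,
        (t1*t4 - t2*t3 = 1 ∨ t1*t4 - t2*t3 = -1) ∧ a' ∣ b' ∧
        ((∀ x y : ℤ, qdval a b (-a) (t1*x + t2*y) (t3*x + t4*y) = qdval a' b' c' x y) ∨
         (∀ x y : ℤ, qdval a b (-a) (t1*x + t2*y) (t3*x + t4*y) = -qdval a' b' c' x y)) := by
  have hgne : Int.gcd s0 t0 ≠ 0 := fun h => hne (Int.gcd_eq_zero_iff.mp h)
  have hgz : (Int.gcd s0 t0 : ℤ) ≠ 0 := by exact_mod_cast hgne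
  obtain ⟨s, hs⟩ : (Int.gcd s0 t0 : ℤ) ∣ s0 := Int.gcd_dvd_left s0 t0
  obtain ⟨t, ht⟩ : (Int.gcd s0 t0 : ℤ) ∣ t0 := Int.gcd_dvd_right s0 t0
  have hbez : (Int.gcd s0 t0 : ℤ) = s0 * Int.gcdA s0 t0 + t0 * Int.gcdB s0 t0 :=
    Int.gcd_eq_gcd_ab s0 t0
  set xp := Int.gcdA s0 t0 with hxp
  set yp := Int.gcdB s0 t0 with hyp
  have he1' : p*s + q*t = s :=
    mul_left_cancel₀ hgz (by linear_combination he1 + (1 - p)*hs - q*ht)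
  have he2' : r*s - p*t = t :=
    mul_left_cancel₀ hgz (by linear_combination he2 - r*hs + (p+1)*ht)
  have hg3 : s*xp + t*yp = 1 :=
    mul_left_cancel₀ hgz (by linear_combination -hbez - xp*hs - yp*ht)
  obtain ⟨k, m0, hm0, hm01⟩ :
      ∃ k m0 : ℤ, (q*xp^2 - 2*p*xp*yp - r*yp^2) + 2*k = m0 ∧ (m0 = 0 ∨ m0 = 1) := by
    rcases Int.even_or_odd (q*xp^2 - 2*p*xp*yp - r*yp^2) with ⟨l, hl⟩ | ⟨l, hl⟩
    · exact ⟨-l, 0, by linarith, Or.inl rfl⟩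
    · exact ⟨-l, 1, by linarith, Or.inr rfl⟩
  have hA : p*(s*k - yp) + q*(t*k + xp) = m0*s - (s*k - yp) := by
    linear_combination (k + xp*yp)*he1' + yp^2*he2' - (q*xp - (p+1)*yp)*hg3 + s*hm0
  have hB : r*(s*k - yp) - p*(t*k + xp) = m0*t - (t*k + xp) := by
    linear_combination (-(xp^2))*he1' + (k - xp*yp)*he2' - ((1-p)*xp - r*yp)*hg3 + t*hm0
  have hdetT : s*(t*k + xp) - (s*k - yp)*t = 1 := by linear_combination hg3
  have hb : 2*a*(s*(s*k - yp)) + b*(s*(t*k + xp) + (s*k - yp)*t) - 2*a*(t*(t*k + xp))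
      = m0 * (a*s^2 + b*(s*t) - a*t^2) := by
    rcases hm01 with rfl | rfl
    · have harg1 : p*(s + (s*k - yp)) + q*(t + (t*k + xp)) = s - (s*k - yp) := by
        linear_combination he1' + hA
      have harg2 : r*(s + (s*k - yp)) - p*(t + (t*k + xp)) = t - (t*k + xp) := by
        linear_combination he2' + hB
      have hval2 : a*(s - (s*k - yp))^2 + b*(s - (s*k - yp))*(t - (t*k + xp))
          - a*(t - (t*k + xp))^2
          = a*(s + (s*k - yp))^2 + b*(s + (s*k - yp))*(t + (t*k + xp))
            - a*(t + (t*k + xp))^2 := by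
        rw [← harg1, ← harg2]; exact hN (s + (s*k - yp)) (t + (t*k + xp))
      have h2 : 2*(2*a*(s*(s*k - yp)) + b*(s*(t*k + xp) + (s*k - yp)*t)
          - 2*a*(t*(t*k + xp))) = 0 := by linear_combination -hval2
      linarith
    · have harg1 : p*(s*k - yp) + q*(t*k + xp) = s - (s*k - yp) := by
        linear_combination hA
      have harg2 : r*(s*k - yp) - p*(t*k + xp) = t - (t*k + xp) := by
        linear_combination hB
      have hval2 : a*(s - (s*k - yp))^2 + b*(s - (s*k - yp))*(t - (t*k + xp))
          - a*(t - (t*k + xp))^2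
          = a*(s*k - yp)^2 + b*(s*k - yp)*(t*k + xp) - a*(t*k + xp)^2 := by
        rw [← harg1, ← harg2]; exact hN (s*k - yp) (t*k + xp)
      linear_combination -hval2
  refine ⟨s, s*k - yp, t, t*k + xp,
    a*s^2 + b*(s*t) - a*t^2,
    2*a*(s*(s*k - yp)) + b*(s*(t*k + xp) + (s*k - yp)*t) - 2*a*(t*(t*k + xp)),
    a*(s*k - yp)^2 + b*((s*k - yp)*(t*k + xp)) - a*(t*k + xp)^2,
    Or.inl hdetT, ⟨m0, by linear_combination hb⟩, Or.inl ?_⟩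
  intro x y
  simp only [qdval]
  ring

/-- Backward key lemma. -/
private lemma keyback (a b D t1 t2 t3 t4 a' b' c' : ℤ) (hcop : IsCoprime a b)
    (hD : D = b^2 + 4*a^2) (hDpos : 0 < D)
    (hdet2 : (t1*t4 - t2*t3)^2 = 1) (hdvd : a' ∣ b')
    (hE : ∀ x y : ℤ, a*(t1*x+t2*y)^2 + b*(t1*x+t2*y)*(t3*x+t4*y) - a*(t3*x+t4*y)^2
        = a'*x^2 + b'*x*y + c'*y^2) :
    ∃ x y : ℤ, x^2 - D*y^2 = -4 := by
  have eqa : a*t1^2 + b*(t1*t3) - a*t3^2 = a' := by linear_combination hE 1 0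
  have eqc : a*t2^2 + b*(t2*t4) - a*t4^2 = c' := by linear_combination hE 0 1
  have eqb : 2*a*(t1*t2) + b*(t1*t4 + t2*t3) - 2*a*(t3*t4) = b' := by
    linear_combination hE 1 1 - hE 1 0 - hE 0 1
  have F1 : a'*t4^2 - b'*(t3*t4) + c'*t3^2 = a := by
    linear_combination (-(t4^2))*eqa + (t3*t4)*eqb + (-(t3^2))*eqc + a*hdet2
  have F2 : -2*a'*(t2*t4) + b'*(t1*t4 + t2*t3) - 2*c'*(t1*t3) = b := by
    linear_combination (2*t2*t4)*eqa + (-(t1*t4 + t2*t3))*eqb + (2*t1*t3)*eqc + b*hdet2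
  have F3 : a'*t2^2 - b'*(t1*t2) + c'*t1^2 = -a := by
    linear_combination (-(t2^2))*eqa + (t1*t2)*eqb + (-(t1^2))*eqc + (-a)*hdet2
  have ha'0 : a' ≠ 0 := by
    intro h0
    have hb0 : b' = 0 := by
      have := hdvd; rw [h0] at this; exact zero_dvd_iff.mp this
    have eqa0 : a*t1^2 + b*(t1*t3) - a*t3^2 = 0 := by rw [← h0]; exact eqa
    have eqb0 : 2*a*(t1*t2) + b*(t1*t4 + t2*t3) - 2*a*(t3*t4) = 0 := by
      rw [← hb0]; exact eqb
    have hzero : D * ((t1*t4 - t2*t3)^2) = 0 := by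
      linear_combination ((t1*t4 - t2*t3)^2)*hD
        + (2*a*(t1*t2) + b*(t1*t4 + t2*t3) - 2*a*(t3*t4))*eqb0
        + (-(4*(a*t2^2 + b*(t2*t4) - a*t4^2)))*eqa0
    rw [hdet2, mul_one] at hzero
    omega
  obtain ⟨e, he⟩ := hdvd
  obtain ⟨x, y, hxy⟩ := hcop
  have hQ1 : c'*(t1^2 + t3^2) = a'*(e*(t3*t4 + t1*t2) - t4^2 - t2^2) := by
    linear_combination F1 + F3 + (t3*t4 + t1*t2)*he
  have hcomb : a'*(x*(t4^2 - e*(t3*t4)) + y*(e*(t1*t4 + t2*t3) - 2*t2*t4))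
      + c'*(x*t3^2 - 2*y*(t1*t3)) = 1 := by
    linear_combination x*F1 + y*F2 + hxy + (x*(t3*t4) - y*(t1*t4 + t2*t3))*he
  have hQ : t1^2 + t3^2
      = a'*((t1^2 + t3^2)*(x*(t4^2 - e*(t3*t4)) + y*(e*(t1*t4 + t2*t3) - 2*t2*t4))
        + (x*t3^2 - 2*y*(t1*t3))*(e*(t3*t4 + t1*t2) - t4^2 - t2^2)) := by
    linear_combination (-(t1^2 + t3^2))*hcomb + (x*t3^2 - 2*y*(t1*t3))*hQ1
  set Y0 := (t1^2 + t3^2)*(x*(t4^2 - e*(t3*t4)) + y*(e*(t1*t4 + t2*t3) - 2*t2*t4))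
      + (x*t3^2 - 2*y*(t1*t3))*(e*(t3*t4 + t1*t2) - t4^2 - t2^2) with hY0def
  have hP : 4*a*(t1*t3) + b*(t3^2 - t1^2)
      = a'*(4*t1*t3*(t4^2 - e*(t3*t4)) + (t3^2 - t1^2)*(e*(t1*t4 + t2*t3) - 2*t2*t4)
        + 2*t1*t3*(e*(t3*t4 + t1*t2) - t4^2 - t2^2)) := by
    linear_combination (-(4*t1*t3))*F1 + (-(t3^2 - t1^2))*F2 + (2*t1*t3)*hQ1
      + ((t3^2 - t1^2)*(t1*t4 + t2*t3) - 4*t1*t3*(t3*t4))*he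
  set X0 := 4*t1*t3*(t4^2 - e*(t3*t4)) + (t3^2 - t1^2)*(e*(t1*t4 + t2*t3) - 2*t2*t4)
      + 2*t1*t3*(e*(t3*t4 + t1*t2) - t4^2 - t2^2) with hX0def
  refine ⟨X0, Y0, ?_⟩
  have hcancel : a'^2 * (X0^2 - D*Y0^2) = a'^2 * (-4) := by
    linear_combination
      (-(4*a*(t1*t3) + b*(t3^2 - t1^2) + a'*X0))*hP
      + D*((t1^2 + t3^2) + a'*Y0)*hQ
      - 4*((a*t1^2 + b*(t1*t3) - a*t3^2) + a')*eqa
      - ((t1^2 + t3^2)^2)*hD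
  exact mul_left_cancel₀ (pow_ne_zero 2 ha'0) hcancel

theorem negative_pell_iff (a b : ℤ) (ha : 0 < a) (hb : 0 < b)
    (hcop : IsCoprime a b) (D : ℤ) (hD : D = b^2 + 4*a^2) (hns : ¬ IsSquare D) :
    (∃ x y : ℤ, x^2 - D*y^2 = -4) ↔
      ∃ t1 t2 t3 t4 a' b' c' : ℤ,
        (t1*t4 - t2*t3 = 1 ∨ t1*t4 - t2*t3 = -1) ∧ a' ∣ b' ∧
        ((∀ x y : ℤ, qdval a b (-a) (t1*x + t2*y) (t3*x + t4*y) = qdval a' b' c' x y) ∨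
         (∀ x y : ℤ, qdval a b (-a) (t1*x + t2*y) (t3*x + t4*y) = -qdval a' b' c' x y)) := by
  constructor
  · rintro ⟨u, v, huv⟩
    rw [hD] at huv
    have h1 : (u - b*v)*(u + b*v) = 4*(a^2*v^2 - 1) := by linear_combination huv
    obtain ⟨q0, hq0⟩ : ∃ q0 : ℤ, u - b*v = 2*q0 := by
      rcases Int.even_or_odd (u - b*v) with ⟨l, hl⟩ | ⟨l, hl⟩
      · exact ⟨l, by linarith⟩
      · exfalso
        have ho1 : Odd (u - b*v) := ⟨l, hl⟩
        have ho2 : Odd (u + b*v) := ⟨l + b*v, by linarith⟩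
        have ho := ho1.mul ho2
        rw [h1] at ho
        obtain ⟨w, hw⟩ := ho
        have hw' : 4*(a^2*v^2 - 1) = 2*w + 1 := hw
        generalize a^2*v^2 - 1 = W at hw'
        omega
    have hq2 : q0^2 + b*v*q0 = a^2*v^2 - 1 :=
      mul_left_cancel₀ (by norm_num : (4:ℤ) ≠ 0)
        (by linear_combination huv - (u + b*v + 2*q0)*hq0)
    have hN : ∀ X Y : ℤ, a*((-(a*v))*X + q0*Y)^2
        + b*((-(a*v))*X + q0*Y)*((-(q0 + b*v))*X - (-(a*v))*Y)
        - a*((-(q0 + b*v))*X - (-(a*v))*Y)^2 = a*X^2 + b*X*Y - a*Y^2 := by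
      intro X Y
      linear_combination (-(a*X^2 + b*X*Y - a*Y^2))*hq2
    have hdetp : (-(a*v))^2 + q0*(-(q0 + b*v)) = 1 := by linear_combination -hq2
    by_cases hc : q0 = 0 ∧ a*v = -1
    · exact keyfwd a b (-(a*v)) q0 (-(q0 + b*v)) (1 + -(a*v)) (-(q0 + b*v)) hN
        (by linear_combination hdetp) (by ring)
        (by rintro ⟨h1', _⟩; rw [hc.2] at h1'; norm_num at h1')
    · exact keyfwd a b (-(a*v)) q0 (-(q0 + b*v)) q0 (1 - -(a*v)) hN
        (by ring) (by linear_combination hdetp)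
        (by rintro ⟨h1', h2'⟩; exact hc ⟨h1', by linarith⟩)
  · rintro ⟨t1, t2, t3, t4, a', b', c', hdet, hdvd, hE | hE⟩
    · have hD2 : (t1*t4 - t2*t3)^2 = 1 := by rcases hdet with h | h <;> rw [h] <;> norm_num
      have hDpos : 0 < D := by nlinarith [mul_pos ha ha, sq_nonneg b]
      exact keyback a b D t1 t2 t3 t4 a' b' c' hcop hD hDpos hD2 hdvd
        (fun x y => by have h := hE x y; simp only [qdval] at h; linear_combination h)
    · have hD2 : (t1*t4 - t2*t3)^2 = 1 := by rcases hdet with h | h <;> rw [h] <;> norm_num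
      have hDpos : 0 < D := by nlinarith [mul_pos ha ha, sq_nonneg b]
      exact keyback a b D t1 t2 t3 t4 (-a') (-b') (-c') hcop hD hDpos hD2
        (neg_dvd.mpr (dvd_neg.mpr hdvd))
        (fun x y => by have h := hE x y; simp only [qdval] at h; linear_combination h)
end

section
/- Let f = αx² + βxy + γy² be a real binary quadratic form with Δ(f) ≠ 0 and α ≠ 0, and let F be a real binary quartic form with F_{M_f} = F and Δ(F) ≠ 0. Write (A,B,C) = (a₄,a₃,a₂) for the leading coefficients of F, and set L = −(12γA − 3βB + 2αC)/(2α) and K = (72β²γA² + 9α(β²+4αγ)B² + 8α³C² − 18β(β²+4αγ)AB + 12α(3β²−4αγ)AC − 24α²βBC)/(4α³). Then 3I(F) = L² + K and J(F) = L·K; in particular L is a root of the cubic resolvent Q_F(x) = x³ − 3I(F)x + J(F), and Δ(F) = ((L² + 4K)/9)·((2L² − K)/9)². -/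
/-!
Comparing the `x⁴` and `x³y` coefficients of `F ∘ M_f = Δ(f)² F` gives a linear system for
`(a₁, a₀)` whose determinant is a nonzero multiple of `a⁷ Δ(f)`, so `a₁` and `a₀` are rational
functions of `a₄, a₃, a₂` and `f`. After substituting them, `3I = L² + K` and `J = LK` are
identities of rational functions, and the resolvent and discriminant statements follow from
these two relations alone.
-/

open Polynomial

/-- Value of the binary quartic form `a4 x⁴ + a3 x³y + a2 x²y² + a1 xy³ + a0 y⁴`. -/
def qval {R : Type*} [CommRing R] (a4 a3 a2 a1 a0 x y : R) : R :=
  a4*x^4 + a3*x^3*y + a2*x^2*y^2 + a1*x*y^3 + a0*y^4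

/-- The invariant `I(F)`. -/
def Iinv {R : Type*} [CommRing R] (a4 a3 a2 a1 a0 : R) : R :=
  12*a4*a0 - 3*a3*a1 + a2^2

/-- The invariant `J(F)`. -/
def Jinv {R : Type*} [CommRing R] (a4 a3 a2 a1 a0 : R) : R :=
  72*a4*a2*a0 + 9*a3*a2*a1 - 27*a4*a1^2 - 27*a3^2*a0 - 2*a2^3

/-- `F_{M_f} = F` where `f = a x² + b xy + c y²`, `M_f = [[b, 2c], [-2a, -b]]`,
and the action is the twisted action `F_T = det(T)⁻² F ∘ T`
(note `det M_f = -(b²-4ac)`, so the condition is division-free). -/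
def fixedMf {R : Type*} [CommRing R] (a b c a4 a3 a2 a1 a0 : R) : Prop :=
  ∀ x y : R, qval a4 a3 a2 a1 a0 (b*x + 2*c*y) (-(2*a*x) - b*y)
    = (b^2 - 4*a*c)^2 * qval a4 a3 a2 a1 a0 x y

-- The paper's `L` and `K`, for `f = a x² + b xy + c y²` and `(A, B, C) = (a4, a3, a2)`.
def Lval {K : Type*} [Field K] (a b c a4 a3 a2 : K) : K :=
  -(12*c*a4 - 3*b*a3 + 2*a*a2) / (2*a)

def Kval {K : Type*} [Field K] (a b c a4 a3 a2 : K) : K :=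
  (72*b^2*c*a4^2 + 9*a*(b^2 + 4*a*c)*a3^2 + 8*a^3*a2^2
    - 18*b*(b^2 + 4*a*c)*a4*a3 + 12*a*(3*b^2 - 4*a*c)*a4*a2
    - 24*a^2*b*a3*a2) / (4*a^3)

namespace fixedMf

section

variable {R : Type*} [CommRing R] {a b c a4 a3 a2 a1 a0 : R}

theorem coeff_x4 (h : fixedMf a b c a4 a3 a2 a1 a0) :
    8*a*b^2*c*a4 - 2*a*b^3*a3 - 16*a^2*c^2*a4 + 4*a^2*b^2*a2
      - 8*a^3*b*a1 + 16*a^4*a0 = 0 := by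
  unfold fixedMf qval at h
  linear_combination h 1 0

/-- The `x³y` coefficient, up to the factor `12` of the finite-difference formula extracting it. -/
theorem twelve_mul_coeff_x3y (h : fixedMf a b c a4 a3 a2 a1 a0) :
    12 * (8*b^3*c*a4 + (-2*b^4 - 4*a*b^2*c - 16*a^2*c^2)*a3
      + (4*a*b^3 + 16*a^2*b*c)*a2 + (-12*a^2*b^2 - 16*a^3*c)*a1 + 32*a^3*b*a0) = 0 := by
  unfold fixedMf qval at h
  linear_combination 3 * h 1 1 - 3 * h 1 (-1) + h 2 1 - h 1 2 - 15 * h 1 0 + 15 * h 0 1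

end

section

variable {K : Type*} [Field K] [CharZero K] {a b c a4 a3 a2 a1 a0 : K}

theorem coeff_x3y (h : fixedMf a b c a4 a3 a2 a1 a0) :
    8*b^3*c*a4 + (-2*b^4 - 4*a*b^2*c - 16*a^2*c^2)*a3
      + (4*a*b^3 + 16*a^2*b*c)*a2 + (-12*a^2*b^2 - 16*a^3*c)*a1 + 32*a^3*b*a0 = 0 :=
  (mul_eq_zero.mp h.twelve_mul_coeff_x3y).resolve_left (by norm_num)

theorem a1_eq (h : fixedMf a b c a4 a3 a2 a1 a0) (ha : a ≠ 0) (hdisc : b^2 - 4*a*c ≠ 0) :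
    a1 = (4*b*c*a4 - (b^2 + 2*a*c)*a3 + 2*a*b*a2) / (2*a^2) := by
  have key : (32*a^4*(b^2 - 4*a*c)) * (2*a^2*a1
      - (4*b*c*a4 - (b^2 + 2*a*c)*a3 + 2*a*b*a2)) = 0 := by
    linear_combination (16*a^4) * h.coeff_x3y - (32*a^3*b) * h.coeff_x4
  have := (mul_eq_zero.mp key).resolve_left (by simp [ha, hdisc])
  field_simp
  linear_combination this

theorem a0_eq (h : fixedMf a b c a4 a3 a2 a1 a0) (ha : a ≠ 0) (hdisc : b^2 - 4*a*c ≠ 0) :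
    a0 = (4*b^2*c*a4 - b^3*a3 + 8*a*c^2*a4 - 4*a*b*c*a3 + 2*a*b^2*a2) / (8*a^3) := by
  have key : (8*a^3*(b^2 - 4*a*c)) * (8*a^3*a0
      - (4*b^2*c*a4 - b^3*a3 + 8*a*c^2*a4 - 4*a*b*c*a3 + 2*a*b^2*a2)) = 0 := by
    linear_combination (-12*a^2*b^2 - 16*a^3*c) * h.coeff_x4 + (8*a^3*b) * h.coeff_x3y
  have := (mul_eq_zero.mp key).resolve_left (by simp [ha, hdisc])
  field_simp
  linear_combination this

theorem three_mul_Iinv (h : fixedMf a b c a4 a3 a2 a1 a0) (ha : a ≠ 0) (hdisc : b^2 - 4*a*c ≠ 0) :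
    3 * Iinv a4 a3 a2 a1 a0 = Lval a b c a4 a3 a2 ^ 2 + Kval a b c a4 a3 a2 := by
  rw [h.a1_eq ha hdisc, h.a0_eq ha hdisc, Iinv, Lval, Kval]
  field_simp
  ring

theorem Jinv_eq (h : fixedMf a b c a4 a3 a2 a1 a0) (ha : a ≠ 0) (hdisc : b^2 - 4*a*c ≠ 0) :
    Jinv a4 a3 a2 a1 a0 = Lval a b c a4 a3 a2 * Kval a b c a4 a3 a2 := by
  rw [h.a1_eq ha hdisc, h.a0_eq ha hdisc, Jinv, Lval, Kval]
  field_simp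
  ring

end

end fixedMf

section Resolvent

variable {K : Type*} [Field K] {I J L M : K}

theorem cubic_resolvent_eval_eq_zero (hI : 3 * I = L^2 + M) (hJ : J = L * M) :
    L^3 - 3 * I * L + J = 0 := by
  linear_combination (-L) * hI + hJ

theorem discr_eq_of_three_mul_eq [CharZero K] (hI : 3 * I = L^2 + M) (hJ : J = L * M) :
    (4 * I^3 - J^2) / 27 = ((L^2 + 4*M)/9) * ((2*L^2 - M)/9)^2 := by
  have : I = (L^2 + M) / 3 := by linear_combination hI / 3
  subst this hJ
  ring

end Resolvent

theorem LK_identities_general (a b c : ℝ) (hdisc : b^2 - 4*a*c ≠ 0) (ha : a ≠ 0)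
    (a4 a3 a2 a1 a0 : ℝ) (hfix : fixedMf a b c a4 a3 a2 a1 a0)
    (L K : ℝ)
    (hL : L = -(12*c*a4 - 3*b*a3 + 2*a*a2) / (2*a))
    (hK : K = (72*b^2*c*a4^2 + 9*a*(b^2 + 4*a*c)*a3^2 + 8*a^3*a2^2
      - 18*b*(b^2 + 4*a*c)*a4*a3 + 12*a*(3*b^2 - 4*a*c)*a4*a2
      - 24*a^2*b*a3*a2) / (4*a^3)) :
    3 * Iinv a4 a3 a2 a1 a0 = L^2 + K ∧
    Jinv a4 a3 a2 a1 a0 = L * K ∧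
    L^3 - 3 * Iinv a4 a3 a2 a1 a0 * L + Jinv a4 a3 a2 a1 a0 = 0 ∧
    (4 * (Iinv a4 a3 a2 a1 a0)^3 - (Jinv a4 a3 a2 a1 a0)^2) / 27
      = ((L^2 + 4*K)/9) * ((2*L^2 - K)/9)^2 := by
  have hI : 3 * Iinv a4 a3 a2 a1 a0 = L^2 + K := hL ▸ hK ▸ hfix.three_mul_Iinv ha hdisc
  have hJ : Jinv a4 a3 a2 a1 a0 = L * K := hL ▸ hK ▸ hfix.Jinv_eq ha hdisc
  exact ⟨hI, hJ, cubic_resolvent_eval_eq_zero hI hJ, discr_eq_of_three_mul_eq hI hJ⟩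

theorem LK_identities (a b c : ℝ) (hdisc : b^2 - 4*a*c ≠ 0) (ha : a ≠ 0)
    (a4 a3 a2 a1 a0 : ℝ) (hfix : fixedMf a b c a4 a3 a2 a1 a0)
    (hΔ : 4 * (Iinv a4 a3 a2 a1 a0)^3 - (Jinv a4 a3 a2 a1 a0)^2 ≠ 0)
    (L K : ℝ)
    (hL : L = -(12*c*a4 - 3*b*a3 + 2*a*a2) / (2*a))
    (hK : K = (72*b^2*c*a4^2 + 9*a*(b^2 + 4*a*c)*a3^2 + 8*a^3*a2^2
      - 18*b*(b^2 + 4*a*c)*a4*a3 + 12*a*(3*b^2 - 4*a*c)*a4*a2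
      - 24*a^2*b*a3*a2) / (4*a^3)) :
    3 * Iinv a4 a3 a2 a1 a0 = L^2 + K ∧
    Jinv a4 a3 a2 a1 a0 = L * K ∧
    L^3 - 3 * Iinv a4 a3 a2 a1 a0 * L + Jinv a4 a3 a2 a1 a0 = 0 ∧
    (4 * (Iinv a4 a3 a2 a1 a0)^3 - (Jinv a4 a3 a2 a1 a0)^2) / 27
      = ((L^2 + 4*K)/9) * ((2*L^2 - K)/9)^2 :=
  LK_identities_general a b c hdisc ha a4 a3 a2 a1 a0 hfix L K hL hK
end

section
/- Let f = αx² + βxy + γy² be an integral primitive binary quadratic form with Δ(f) ≠ 0 and α ≠ 0, and let F be an integral binary quartic form with F_{M_f} = F and Δ(F) ≠ 0. Then L_f(F) and K_f(F) are integers, (L_f(F)² + 4K_f(F))/9 and (2L_f(F)² − K_f(F))/9 are integers, and 9Δ(f) divides 4(2L_f(F)² − K_f(F)). -/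
open Polynomial

/-!
Comparing coefficients in `F_{M_f} = F` gives two linear relations between the coefficients of
`F` and of `f`. Because `(a, b, c)` generates the unit ideal, they force `2a ∣ b a₃ - 4c a₄`, and
in terms of `s = (b a₃ - 4c a₄) / (2a)` one gets `L = 3s - a₂` and `K = 3 I(F) - L²`, so that
`(2L² - K)/9 = H := 3s² - 2s a₂ + a₃a₁ - 4a₄a₀` and `(L² + 4K)/9 = I(F) - H`. Finally `a²`, `b²`,
`c²` times `4H` are multiples of `Δ(f)`, and `a², b², c²` still generate the unit ideal.
-/

theorem dvd_of_forall_mem_dvd_mul {R : Type*} [CommRing R] {s : Set R}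
    (hs : Ideal.span s = ⊤) {d u : R} (h : ∀ x ∈ s, d ∣ x * u) : d ∣ u := by
  have hle : Ideal.span s ≤ (Ideal.span {d}).colon {u} :=
    Ideal.span_le.mpr fun x hx => by
      simpa [Submodule.mem_colon_singleton, Ideal.mem_span_singleton] using h x hx
  simpa [Submodule.mem_colon_singleton, Ideal.mem_span_singleton] using
    hle (hs ▸ Submodule.mem_top : (1 : R) ∈ Ideal.span s)

theorem Int.span_triple_eq_top_of_gcd_eq_one {a b c : ℤ} (h : Int.gcd (Int.gcd a b) c = 1) :
    Ideal.span {a, b, c} = ⊤ := by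
  have bezout : (1 : ℤ) = (a * Int.gcdA a b + b * Int.gcdB a b) * Int.gcdA (Int.gcd a b) c
      + c * Int.gcdB (Int.gcd a b) c := by
    rw [← Int.gcd_eq_gcd_ab, ← Int.gcd_eq_gcd_ab, h, Nat.cast_one]
  rw [Ideal.eq_top_iff_one, bezout]
  refine Ideal.add_mem _ (Ideal.mul_mem_right _ _ (Ideal.add_mem _ ?_ ?_)) ?_ <;>
    exact Ideal.mul_mem_right _ _ (Ideal.subset_span (by simp))

theorem fixedMf.linear_relations {R : Type*} [CommRing R] [IsDomain R] [CharZero R]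
    {a b c a4 a3 a2 a1 a0 : R} (hfix : fixedMf a b c a4 a3 a2 a1 a0)
    (hdisc : b^2 - 4*a*c ≠ 0) (ha : a ≠ 0) :
    b * (b*a3 - 4*c*a4) = 2*a*(b*a2 - c*a3 - a*a1) ∧
      c * (b*a3 - 4*c*a4) = a*(b*a1 - 4*a*a0) := by
  have e10 := hfix 1 0
  have e11 := hfix 1 1
  have e1m1 := hfix 1 (-1)
  have e21 := hfix 2 1
  have em21 := hfix (-2) 1
  simp only [qval] at e10 e11 e1m1 e21 em21
  -- `e10` compares the `x⁴`-coefficients, `e21 - em21 - 2 e11 + 2 e1m1` is `12` times the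
  -- comparison of the `x³y`-coefficients
  constructor
  · refine mul_left_cancel₀ (by simp [ha, hdisc] : (-24*a*(b^2 - 4*a*c) : R) ≠ 0) ?_
    linear_combination 24*b*e10 - a*(e21 - em21 - 2*e11 + 2*e1m1)
  · refine mul_left_cancel₀ (by simp [ha, hdisc] : (-48*a^2*(b^2 - 4*a*c) : R) ≠ 0) ?_
    linear_combination 12*(b^2 + 4*a*c)*e10 - a*b*(e21 - em21 - 2*e11 + 2*e1m1)

theorem two_mul_dvd_of_linear_relations {a b c a4 a3 a2 a1 a0 : ℤ}
    (hspan : Ideal.span {a, b, c} = ⊤) (ha : a ≠ 0)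
    (hb : b * (b*a3 - 4*c*a4) = 2*a*(b*a2 - c*a3 - a*a1))
    (hc : c * (b*a3 - 4*c*a4) = a*(b*a1 - 4*a*a0)) :
    2*a ∣ b*a3 - 4*c*a4 := by
  have hmem {d u : ℤ} (hda : d ∣ a*u) (hdb : d ∣ b*u) (hdc : d ∣ c*u) : d ∣ u :=
    dvd_of_forall_mem_dvd_mul hspan (by simp [hda, hdb, hdc])
  obtain ⟨w, hw⟩ : a ∣ b*a3 - 4*c*a4 :=
    hmem (dvd_mul_right _ _) ⟨2*(b*a2 - c*a3 - a*a1), by rw [hb]; ring⟩ ⟨_, hc⟩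
  have hbw : b*w = 2*(b*a2 - c*a3 - a*a1) :=
    mul_left_cancel₀ ha (by linear_combination hb - b*hw)
  have hcw : c*w = b*a1 - 4*a*a0 := mul_left_cancel₀ ha (by linear_combination hc - c*hw)
  have hw2 : 2 ∣ w^2 := hmem
    ⟨(b*a2 - c*a3 - a*a1)*a3 - 2*c*a4*w, by linear_combination (-w)*hw + a3*hbw⟩
    ⟨(b*a2 - c*a3 - a*a1)*w, by linear_combination w*hbw⟩
    ⟨(b*a2 - c*a3 - a*a1)*a1 - 2*a*a0*w, by linear_combination w*hcw + a1*hbw⟩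
  rw [hw, mul_comm 2 a]
  exact mul_dvd_mul_left a (Int.prime_two.dvd_of_dvd_pow hw2)

theorem fixedMf.exists_parameter {a b c a4 a3 a2 a1 a0 : ℤ}
    (hfix : fixedMf a b c a4 a3 a2 a1 a0) (hspan : Ideal.span {a, b, c} = ⊤)
    (hdisc : b^2 - 4*a*c ≠ 0) (ha : a ≠ 0) :
    ∃ s : ℤ, 2*a*s = b*a3 - 4*c*a4 ∧ a*a1 = b*(a2 - s) - c*a3 ∧ 4*a*a0 = b*a1 - 2*c*s := by
  obtain ⟨hb, hc⟩ := hfix.linear_relations hdisc ha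
  obtain ⟨s, hs⟩ := two_mul_dvd_of_linear_relations hspan ha hb hc
  refine ⟨s, hs.symm, ?_, ?_⟩
  · exact mul_left_cancel₀ (mul_ne_zero two_ne_zero ha) (by linear_combination hb - b*hs)
  · exact mul_left_cancel₀ ha (by linear_combination hc - c*hs)

theorem disc_dvd_four_mul {R : Type*} [CommRing R] {a b c a4 a3 a2 a1 a0 s : R}
    (hspan : Ideal.span {a, b, c} = ⊤) (h3 : 2*a*s = b*a3 - 4*c*a4)
    (h1 : a*a1 = b*(a2 - s) - c*a3) (h0 : 4*a*a0 = b*a1 - 2*c*s) :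
    b^2 - 4*a*c ∣ 4*(3*s^2 - 2*s*a2 + a3*a1 - 4*a4*a0) := by
  refine dvd_of_forall_mem_dvd_mul (Ideal.span_pow_eq_top _ hspan 2) ?_
  simp only [Set.image_insert_eq, Set.image_singleton, Set.mem_insert_iff,
    Set.mem_singleton_iff, forall_eq_or_imp, forall_eq]
  refine ⟨⟨a3^2 - 4*a4*a2 + 4*a4*s, ?_⟩, ⟨4*(s^2 - 4*a4*a0), ?_⟩, ⟨a1^2 - 4*a2*a0 + 4*a0*s, ?_⟩⟩
  · linear_combination (-4*a*a2 + 6*a*s + b*a3)*h3 + (4*a*a3 - 4*b*a4)*h1 + (-4*a*a4)*h0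
  · linear_combination 4*((-4*a*a0)*h3 + (2*b*s)*h1 + (2*a*s - b*a3)*h0)
  · linear_combination (-4*c*a0)*h3 + (-4*b*a0 + 4*c*a1)*h1 + (b*a1 - 4*c*a2 + 6*c*s)*h0

theorem Lf_eq_three_mul_sub {𝕜 : Type*} [Field 𝕜] [CharZero 𝕜] {a b c a4 a3 a2 s : ℤ}
    (ha : a ≠ 0) (h3 : 2*a*s = b*a3 - 4*c*a4) :
    -(12*(c:𝕜)*a4 - 3*(b:𝕜)*a3 + 2*(a:𝕜)*a2) / (2*(a:𝕜)) = ((3*s - a2 : ℤ) : 𝕜) := by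
  have h3' : (2*a*s : 𝕜) = b*a3 - 4*c*a4 := by exact_mod_cast h3
  rw [div_eq_iff (by simpa using ha)]
  push_cast
  linear_combination (-3 : 𝕜) * h3'

theorem Kf_eq_three_mul_Iinv_sub_sq {𝕜 : Type*} [Field 𝕜] [CharZero 𝕜]
    {a b c a4 a3 a2 a1 a0 s : ℤ} (ha : a ≠ 0) (h3 : 2*a*s = b*a3 - 4*c*a4) (h1 : a*a1 = b*(a2 - s) - c*a3)
    (h0 : 4*a*a0 = b*a1 - 2*c*s) :
    (72*(b:𝕜)^2*(c:𝕜)*(a4:𝕜)^2 + 9*(a:𝕜)*((b:𝕜)^2 + 4*(a:𝕜)*(c:𝕜))*(a3:𝕜)^2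
      + 8*(a:𝕜)^3*(a2:𝕜)^2 - 18*(b:𝕜)*((b:𝕜)^2 + 4*(a:𝕜)*(c:𝕜))*(a4:𝕜)*(a3:𝕜)
      + 12*(a:𝕜)*(3*(b:𝕜)^2 - 4*(a:𝕜)*(c:𝕜))*(a4:𝕜)*(a2:𝕜)
      - 24*(a:𝕜)^2*(b:𝕜)*(a3:𝕜)*(a2:𝕜)) / (4*(a:𝕜)^3)
      = ((3 * Iinv a4 a3 a2 a1 a0 - (3*s - a2)^2 : ℤ) : 𝕜) := by
  have hK : 72*b^2*c*a4^2 + 9*a*(b^2 + 4*a*c)*a3^2 + 8*a^3*a2^2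
      - 18*b*(b^2 + 4*a*c)*a4*a3 + 12*a*(3*b^2 - 4*a*c)*a4*a2 - 24*a^2*b*a3*a2
      = (3 * Iinv a4 a3 a2 a1 a0 - (3*s - a2)^2) * (4*a^3) := by
    unfold Iinv
    linear_combination (-12*a^2*a2 + 18*a^2*s - 9*a*b*a3 + 18*b^2*a4)*h3
      + (36*a^2*a3 - 36*a*b*a4)*h1 - (36*a^2*a4)*h0
  rw [div_eq_iff (by simpa using ha)]
  exact_mod_cast hK

theorem LK_integrality_general (a b c : ℤ) (hprim : Int.gcd (Int.gcd a b) c = 1)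
    (hdisc : b^2 - 4*a*c ≠ 0) (ha : a ≠ 0)
    (a4 a3 a2 a1 a0 : ℤ) (hfix : fixedMf a b c a4 a3 a2 a1 a0)
    (L K : ℚ)
    (hL : L = -(12*(c:ℚ)*(a4:ℚ) - 3*(b:ℚ)*(a3:ℚ) + 2*(a:ℚ)*(a2:ℚ)) / (2*(a:ℚ)))
    (hK : K = (72*(b:ℚ)^2*(c:ℚ)*(a4:ℚ)^2 + 9*(a:ℚ)*((b:ℚ)^2 + 4*(a:ℚ)*(c:ℚ))*(a3:ℚ)^2
      + 8*(a:ℚ)^3*(a2:ℚ)^2 - 18*(b:ℚ)*((b:ℚ)^2 + 4*(a:ℚ)*(c:ℚ))*(a4:ℚ)*(a3:ℚ)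
      + 12*(a:ℚ)*(3*(b:ℚ)^2 - 4*(a:ℚ)*(c:ℚ))*(a4:ℚ)*(a2:ℚ)
      - 24*(a:ℚ)^2*(b:ℚ)*(a3:ℚ)*(a2:ℚ)) / (4*(a:ℚ)^3)) :
    (∃ l : ℤ, L = l) ∧ (∃ k : ℤ, K = k) ∧
    (∃ m : ℤ, (L^2 + 4*K)/9 = m) ∧ (∃ n : ℤ, (2*L^2 - K)/9 = n) ∧
    (∃ d : ℤ, 4*(2*L^2 - K) = (9*(b^2 - 4*a*c) : ℤ) * d) := by
  have hspan := Int.span_triple_eq_top_of_gcd_eq_one hprim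
  obtain ⟨s, h3, h1, h0⟩ := hfix.exists_parameter hspan hdisc ha
  obtain ⟨d, hd⟩ := disc_dvd_four_mul hspan h3 h1 h0
  set H := 3*s^2 - 2*s*a2 + a3*a1 - 4*a4*a0 with hH
  have hI : (3*s - a2)^2 - Iinv a4 a3 a2 a1 a0 = 3*H := by rw [hH, Iinv]; ring
  rw [Lf_eq_three_mul_sub ha h3] at hL
  rw [Kf_eq_three_mul_Iinv_sub_sq ha h3 h1 h0] at hK
  subst hL hK
  have hIℚ : (3*(s:ℚ) - a2)^2 - Iinv a4 a3 a2 a1 a0 = 3*H := by exact_mod_cast hI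
  have hdℚ : (4*H : ℚ) = (b^2 - 4*a*c) * d := by exact_mod_cast hd
  refine ⟨⟨_, rfl⟩, ⟨_, rfl⟩, ⟨Iinv a4 a3 a2 a1 a0 - H, ?_⟩, ⟨H, ?_⟩, ⟨d, ?_⟩⟩ <;> push_cast
  · linear_combination (-1/3 : ℚ) * hIℚ
  · linear_combination (1/3 : ℚ) * hIℚ
  · linear_combination 12 * hIℚ + 9 * hdℚ

theorem LK_integrality (a b c : ℤ) (hprim : Int.gcd (Int.gcd a b) c = 1)
    (hdisc : b^2 - 4*a*c ≠ 0) (ha : a ≠ 0)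
    (a4 a3 a2 a1 a0 : ℤ) (hfix : fixedMf a b c a4 a3 a2 a1 a0)
    (hΔ : 4 * (Iinv a4 a3 a2 a1 a0)^3 - (Jinv a4 a3 a2 a1 a0)^2 ≠ 0)
    (L K : ℚ)
    (hL : L = -(12*(c:ℚ)*(a4:ℚ) - 3*(b:ℚ)*(a3:ℚ) + 2*(a:ℚ)*(a2:ℚ)) / (2*(a:ℚ)))
    (hK : K = (72*(b:ℚ)^2*(c:ℚ)*(a4:ℚ)^2 + 9*(a:ℚ)*((b:ℚ)^2 + 4*(a:ℚ)*(c:ℚ))*(a3:ℚ)^2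
      + 8*(a:ℚ)^3*(a2:ℚ)^2 - 18*(b:ℚ)*((b:ℚ)^2 + 4*(a:ℚ)*(c:ℚ))*(a4:ℚ)*(a3:ℚ)
      + 12*(a:ℚ)*(3*(b:ℚ)^2 - 4*(a:ℚ)*(c:ℚ))*(a4:ℚ)*(a2:ℚ)
      - 24*(a:ℚ)^2*(b:ℚ)*(a3:ℚ)*(a2:ℚ)) / (4*(a:ℚ)^3)) :
    (∃ l : ℤ, L = l) ∧ (∃ k : ℤ, K = k) ∧
    (∃ m : ℤ, (L^2 + 4*K)/9 = m) ∧ (∃ n : ℤ, (2*L^2 - K)/9 = n) ∧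
    (∃ d : ℤ, 4*(2*L^2 - K) = (9*(b^2 - 4*a*c) : ℤ) * d) :=
  LK_integrality_general a b c hprim hdisc ha a4 a3 a2 a1 a0 hfix L K hL hK
end

section
/- Let f = αx² + βxy + γy² be an integral primitive binary quadratic form with Δ(f) ≠ 0. Let s = 8 if Δ(f) is odd and s = 1 if Δ(f) is even. If α ≠ 0, then the subgroup Λ₁ of ℤ³ consisting of all triples (A,B,C) such that 2α² divides 4βγA − (β²+2αγ)B + 2αβC and 8α³ divides 4γ(β²+2αγ)A − β(β²+4αγ)B + 2αβ²C has index s·|α|³ in ℤ³. If β ≠ 0 and β² + 4αγ ≠ 0, then the subgroup Λ₂ of ℤ³ consisting of all triples (A,B,C) such that β(β²+4αγ) divides γ(4β²+8αγ)A + 2αβ²B − 8α³C and β(β²+4αγ) divides 8γ³A − 2β²γB − α(4β²+8αγ)C has index s·|β(β²+4αγ)|/8 in ℤ³. -/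
/-- The lattice `Λ₁` attached to `f = a x² + b xy + c y²` (the image of the lattice
of integral quartic forms fixed by `M_f` under the first three coefficients). -/
def lat1 (a b c : ℤ) : AddSubgroup (ℤ × ℤ × ℤ) where
  carrier := {p | 2*a^2 ∣ 4*b*c*p.1 - (b^2 + 2*a*c)*p.2.1 + 2*a*b*p.2.2 ∧
                  8*a^3 ∣ 4*c*(b^2 + 2*a*c)*p.1 - b*(b^2 + 4*a*c)*p.2.1 + 2*a*b^2*p.2.2}
  zero_mem' := by simp
  add_mem' := by
    rintro p q ⟨h1, h2⟩ ⟨g1, g2⟩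
    refine ⟨?_, ?_⟩
    · have h := dvd_add h1 g1
      convert h using 1
      on_goal 1 => rfl
      simp only [Prod.fst_add, Prod.snd_add]
      ring
    · have h := dvd_add h2 g2
      convert h using 1
      on_goal 1 => rfl
      simp only [Prod.fst_add, Prod.snd_add]
      ring
  neg_mem' := by
    rintro p ⟨h1, h2⟩
    refine ⟨?_, ?_⟩
    · have h := (dvd_neg (α := ℤ)).mpr h1
      convert h using 1
      on_goal 1 => rfl
      simp only [Prod.fst_neg, Prod.snd_neg]
      ring
    · have h := (dvd_neg (α := ℤ)).mpr h2
      convert h using 1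
      on_goal 1 => rfl
      simp only [Prod.fst_neg, Prod.snd_neg]
      ring

/-- The lattice `Λ₂` attached to `f = a x² + b xy + c y²` (the image of the lattice
of integral quartic forms fixed by `M_f` under the coefficients `(a₄, a₂, a₀)`). -/
def lat2 (a b c : ℤ) : AddSubgroup (ℤ × ℤ × ℤ) where
  carrier := {p | b*(b^2 + 4*a*c) ∣ c*(4*b^2 + 8*a*c)*p.1 + 2*a*b^2*p.2.1 - 8*a^3*p.2.2 ∧
                  b*(b^2 + 4*a*c) ∣ 8*c^3*p.1 - 2*b^2*c*p.2.1 - a*(4*b^2 + 8*a*c)*p.2.2}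
  zero_mem' := by simp
  add_mem' := by
    rintro p q ⟨h1, h2⟩ ⟨g1, g2⟩
    refine ⟨?_, ?_⟩
    · have h := dvd_add h1 g1
      convert h using 1
      on_goal 1 => rfl
      simp only [Prod.fst_add, Prod.snd_add]
      ring
    · have h := dvd_add h2 g2
      convert h using 1
      on_goal 1 => rfl
      simp only [Prod.fst_add, Prod.snd_add]
      ring
  neg_mem' := by
    rintro p ⟨h1, h2⟩
    refine ⟨?_, ?_⟩
    · have h := (dvd_neg (α := ℤ)).mpr h1
      convert h using 1
      on_goal 1 => rfl
      simp only [Prod.fst_neg, Prod.snd_neg]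
      ring
    · have h := (dvd_neg (α := ℤ)).mpr h2
      convert h using 1
      on_goal 1 => rfl
      simp only [Prod.fst_neg, Prod.snd_neg]
      ring

/-!
Each lattice is the kernel of a map `ℤ³ → ℤ/m₁ × ℤ/m₂`, `p ↦ (⟪u, p⟫, ⟪w, p⟫)`. Its index is
`|m₁ m₂|` divided by the index in `ℤ²` of the lattice generated by the columns of the matrix with
rows `u, w` together with `(m₁, 0)` and `(0, m₂)`; and the index of a lattice in `ℤ²` is the gcd
of the `2 × 2` minors of any generating set. For a primitive form these gcds are `2α²` (`16α²`)
for `Λ₁` and `|β(β² + 4αγ)|` (`8|β(β² + 4αγ)|`) for `Λ₂` when `β`, equivalently `Δ`, is odd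
(even).
-/

theorem AddSubgroup.index_comap_mul_index_sup {G G' : Type*} [AddGroup G] [AddCommGroup G']
    (f : G →+ G') (H : AddSubgroup G') :
    (H.comap f).index * (f.range ⊔ H).index = H.index := by
  rw [AddSubgroup.index_comap, ← AddSubgroup.relIndex_sup_right,
    AddSubgroup.relIndex_mul_index le_sup_right]

def wedge (x y : ℤ × ℤ) : ℤ := x.1 * y.2 - x.2 * y.1

lemma wedge_mk (p q r s : ℤ) : wedge (p, q) (r, s) = p * s - q * r := rfl

@[simp] lemma wedge_self (x : ℤ × ℤ) : wedge x x = 0 := by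
  simp only [wedge]; ring

lemma wedge_swap (x y : ℤ × ℤ) : wedge y x = -wedge x y := by
  simp only [wedge]; ring

lemma finTwoProd_det_eq_wedge (v : Fin 2 → ℤ × ℤ) :
    (Module.Basis.finTwoProd ℤ).det v = wedge (v 0) (v 1) := by
  rw [Module.Basis.det_apply, Matrix.det_fin_two]
  simp only [Module.Basis.toMatrix_apply, Module.Basis.coe_finTwoProd_repr, Matrix.cons_val_zero,
    Matrix.cons_val_one, wedge]
  ring

lemma dvd_wedge_of_mem_closure {S : Set (ℤ × ℤ)} {t : ℤ}
    (hS : ∀ x ∈ S, ∀ y ∈ S, t ∣ wedge x y) {x y : ℤ × ℤ}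
    (hx : x ∈ AddSubgroup.closure S) (hy : y ∈ AddSubgroup.closure S) : t ∣ wedge x y := by
  induction hx, hy using AddSubgroup.closure_induction₂ with
  | mem x y hx hy => exact hS x hx y hy
  | zero_left => simp [wedge]
  | zero_right => simp [wedge]
  | add_left x y z _ _ _ hxz hyz =>
    rw [show wedge (x + y) z = wedge x z + wedge y z by
      simp only [wedge, Prod.fst_add, Prod.snd_add]; ring]
    exact dvd_add hxz hyz
  | add_right y z x _ _ _ hxy hxz =>
    rw [show wedge x (y + z) = wedge x y + wedge x z by
      simp only [wedge, Prod.fst_add, Prod.snd_add]; ring]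
    exact dvd_add hxy hxz
  | neg_left x y _ _ h =>
    rw [show wedge (-x) y = -wedge x y by simp only [wedge, Prod.fst_neg, Prod.snd_neg]; ring]
    exact h.neg_right
  | neg_right x y _ _ h =>
    rw [show wedge x (-y) = -wedge x y by simp only [wedge, Prod.fst_neg, Prod.snd_neg]; ring]
    exact h.neg_right

lemma forall_dvd_wedge_insert {S : Set (ℤ × ℤ)} {t : ℤ} {v : ℤ × ℤ} :
    (∀ x ∈ insert v S, ∀ y ∈ insert v S, t ∣ wedge x y) ↔
      (∀ y ∈ S, t ∣ wedge v y) ∧ ∀ x ∈ S, ∀ y ∈ S, t ∣ wedge x y := by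
  refine ⟨fun h => ⟨fun y hy => h v (Set.mem_insert _ _) y (Set.mem_insert_of_mem _ hy),
    fun x hx y hy => h x (Set.mem_insert_of_mem _ hx) y (Set.mem_insert_of_mem _ hy)⟩, ?_⟩
  rintro ⟨hv, hS⟩ x (rfl | hx) y (rfl | hy)
  · simp
  · exact hv y hy
  · rw [wedge_swap]
    exact (hv x hx).neg_right
  · exact hS x hx y hy

theorem index_closure_eq_of_dvd_wedge {S : Set (ℤ × ℤ)} {t : ℤ} (ht : t ≠ 0)
    (hdvd : ∀ x ∈ S, ∀ y ∈ S, t ∣ wedge x y)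
    (hgcd : ∀ u : ℤ, (∀ x ∈ S, ∀ y ∈ S, u ∣ wedge x y) → u ∣ t) :
    (AddSubgroup.closure S).index = t.natAbs := by
  obtain ⟨n, snf⟩ := (AddSubgroup.closure S).toIntSubmodule.smithNormalForm
    (Module.Basis.finTwoProd ℤ)
  let e (i : Fin n) : ℤ × ℤ := snf.bN i
  have hM : AddSubgroup.closure (Set.range e) = AddSubgroup.closure S := by
    apply AddSubgroup.toIntSubmodule.injective
    rw [AddSubgroup.toIntSubmodule_closure, Set.range_comp' Subtype.val snf.bN,
      Submodule.span_val_image_eq_iff]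
    exact snf.bN.span_eq
  have hwedge {δ : ℤ} (hδ : ∀ i j, δ ∣ wedge (e i) (e j)) : ∀ x ∈ S, ∀ y ∈ S, δ ∣ wedge x y := by
    intro x hx y hy
    have hmem : ∀ z ∈ S, z ∈ AddSubgroup.closure (Set.range e) :=
      fun z hz => hM ▸ AddSubgroup.subset_closure hz
    exact dvd_wedge_of_mem_closure (by simpa only [Set.forall_mem_range] using hδ)
      (hmem x hx) (hmem y hy)
  obtain hn | rfl := (show n ≤ 2 by simpa using Fintype.card_le_of_embedding snf.f).lt_or_eq
  · have : Subsingleton (Fin n) := Fin.subsingleton_iff_le_one.mpr (by omega)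
    refine absurd (zero_dvd_iff.mp (hgcd 0 (hwedge fun i j => ?_))) ht
    simp [Subsingleton.elim i j]
  · rw [AddSubgroup.index_eq_natAbs_det (Module.Basis.finTwoProd ℤ) _ snf.bN,
      finTwoProd_det_eq_wedge]
    refine Int.natAbs_eq_of_dvd_dvd (hgcd _ (hwedge ?_)) ?_
    · simp only [e, Fin.forall_fin_two, wedge_self, wedge_swap (snf.bN 0 : ℤ × ℤ), dvd_neg,
        dvd_zero, true_and, and_true]
      exact ⟨dvd_rfl, dvd_rfl⟩
    · exact dvd_wedge_of_mem_closure hdvd (snf.bN 0).2 (snf.bN 1).2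

def ofColumns (v₁ v₂ v₃ : ℤ × ℤ) : ℤ × ℤ × ℤ →+ ℤ × ℤ :=
  AddMonoidHom.mk' (fun p => p.1 • v₁ + p.2.1 • v₂ + p.2.2 • v₃) fun p q => by
    simp only [Prod.fst_add, Prod.snd_add, add_zsmul]; abel

@[simp] lemma ofColumns_apply (v₁ v₂ v₃ : ℤ × ℤ) (p : ℤ × ℤ × ℤ) :
    ofColumns v₁ v₂ v₃ p = p.1 • v₁ + p.2.1 • v₂ + p.2.2 • v₃ := rfl

lemma range_ofColumns_sup_prod_zmultiples (v₁ v₂ v₃ : ℤ × ℤ) (m₁ m₂ : ℤ) :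
    (ofColumns v₁ v₂ v₃).range ⊔ (AddSubgroup.zmultiples m₁).prod (AddSubgroup.zmultiples m₂) =
      AddSubgroup.closure {v₁, v₂, v₃, (m₁, 0), (0, m₂)} := by
  have hmem : ∀ x ∈ ({v₁, v₂, v₃, (m₁, 0), (0, m₂)} : Set (ℤ × ℤ)),
      x ∈ AddSubgroup.closure {v₁, v₂, v₃, (m₁, 0), (0, m₂)} :=
    fun x hx => AddSubgroup.subset_closure hx
  apply le_antisymm
  · refine sup_le ?_ ?_
    · rintro _ ⟨p, rfl⟩
      rw [ofColumns_apply]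
      exact add_mem (add_mem (zsmul_mem (hmem _ (by simp)) _) (zsmul_mem (hmem _ (by simp)) _))
        (zsmul_mem (hmem _ (by simp)) _)
    · rintro ⟨_, _⟩ ⟨⟨i, rfl⟩, ⟨j, rfl⟩⟩
      rw [show ((i • m₁, j • m₂) : ℤ × ℤ) = i • (m₁, 0) + j • (0, m₂) by simp]
      exact add_mem (zsmul_mem (hmem _ (by simp)) _) (zsmul_mem (hmem _ (by simp)) _)
  · rw [AddSubgroup.closure_le]
    rintro x (rfl | rfl | rfl | rfl | rfl)
    · exact AddSubgroup.mem_sup_left ⟨(1, 0, 0), by simp⟩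
    · exact AddSubgroup.mem_sup_left ⟨(0, 1, 0), by simp⟩
    · exact AddSubgroup.mem_sup_left ⟨(0, 0, 1), by simp⟩
    · exact AddSubgroup.mem_sup_right ⟨AddSubgroup.mem_zmultiples m₁, zero_mem _⟩
    · exact AddSubgroup.mem_sup_right ⟨zero_mem _, AddSubgroup.mem_zmultiples m₂⟩

theorem index_comap_ofColumns_mul_natAbs {v₁ v₂ v₃ : ℤ × ℤ} {m₁ m₂ t : ℤ} (ht : t ≠ 0)
    (hdvd : ∀ x ∈ ({v₁, v₂, v₃, (m₁, 0), (0, m₂)} : Set (ℤ × ℤ)),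
      ∀ y ∈ ({v₁, v₂, v₃, (m₁, 0), (0, m₂)} : Set (ℤ × ℤ)), t ∣ wedge x y)
    (hgcd : ∀ u : ℤ, (∀ x ∈ ({v₁, v₂, v₃, (m₁, 0), (0, m₂)} : Set (ℤ × ℤ)),
      ∀ y ∈ ({v₁, v₂, v₃, (m₁, 0), (0, m₂)} : Set (ℤ × ℤ)), u ∣ wedge x y) → u ∣ t) :
    (((AddSubgroup.zmultiples m₁).prod (AddSubgroup.zmultiples m₂)).comap
      (ofColumns v₁ v₂ v₃)).index * t.natAbs = (m₁ * m₂).natAbs := by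
  rw [← index_closure_eq_of_dvd_wedge ht hdvd hgcd, ← range_ofColumns_sup_prod_zmultiples,
    AddSubgroup.index_comap_mul_index_sup, AddSubgroup.index_prod, Int.index_zmultiples,
    Int.index_zmultiples, Int.natAbs_mul]

theorem dvd_of_dvd_mul_of_isCoprime_gcd {R : Type*} [CommRing R] [IsDomain R] [GCDMonoid R]
    {t u x y z : R} (hxyz : IsCoprime (gcd x y) z)
    (hx : u ∣ t * x) (hy : u ∣ t * y) (hz : u ∣ t * z) : u ∣ t := by
  obtain ⟨r, s, hrs⟩ := hxyz
  have hg : u ∣ t * gcd x y := (dvd_gcd hx hy).trans (gcd_mul_left' t x y).dvd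
  calc u ∣ r * (t * gcd x y) + s * (t * z) := dvd_add (hg.mul_left r) (hz.mul_left s)
    _ = t := by linear_combination t * hrs

lemma not_dvd_of_gcd_gcd_eq_one {a b c p : ℤ} (h : Int.gcd (Int.gcd a b) c = 1) (hp : Prime p)
    (ha : p ∣ a) (hb : p ∣ b) : ¬ p ∣ c := fun hc =>
  hp.not_isUnit (isUnit_of_dvd_one (by simpa [h] using Int.dvd_coe_gcd (Int.dvd_coe_gcd ha hb) hc))

lemma Prime.dvd_of_dvd_mul_sq_add {R : Type*} [CommRing R] {p x y : R} (hp : Prime p) (hy : p ∣ y)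
    (h : p ∣ x * (x ^ 2 + y)) : p ∣ x :=
  (hp.dvd_or_dvd h).elim id fun h => hp.dvd_of_dvd_pow ((dvd_add_left hy).mp h)

theorem isCoprime_gcd_cubes_of_odd {a b c : ℤ} (hprim : Int.gcd (Int.gcd a b) c = 1)
    (hb : Odd b) :
    IsCoprime (gcd (8 * a ^ 3) (8 * c ^ 3)) (b * (b ^ 2 + 4 * a * c)) := by
  have hodd : Odd (b * (b ^ 2 + 4 * a * c)) := hb.mul (hb.pow.add_even ⟨2 * a * c, by ring⟩)
  refine isCoprime_of_prime_dvd (fun h => by simp [h.2] at hodd) fun p hp hpg hpn => ?_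
  rw [dvd_gcd_iff] at hpg
  have hp2 : ¬ p ∣ 2 := fun h2 =>
    Int.not_even_iff_odd.mpr hodd (even_iff_two_dvd.mpr
      ((hp.associated_of_dvd Int.prime_two h2).symm.dvd.trans hpn))
  have hcube {x : ℤ} (h : p ∣ 8 * x ^ 3) : p ∣ x :=
    (hp.dvd_or_dvd h).elim (fun h8 => absurd (hp.dvd_of_dvd_pow (n := 3) (by norm_num [h8])) hp2)
      hp.dvd_of_dvd_pow
  have ha := hcube hpg.1
  exact not_dvd_of_gcd_gcd_eq_one hprim hp ha
    (hp.dvd_of_dvd_mul_sq_add ((ha.mul_left 4).mul_right c) hpn) (hcube hpg.2)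

theorem isCoprime_gcd_cubes_of_even {a B c : ℤ} (hprim : Int.gcd (Int.gcd a (2 * B)) c = 1) :
    IsCoprime (gcd (a ^ 3) (c ^ 3)) (B * (B ^ 2 + a * c)) := by
  refine isCoprime_of_prime_dvd (fun h => ?_) fun p hp hpg hpn => ?_
  · obtain ⟨ha, hc⟩ : a = 0 ∧ c = 0 := by simpa using h.1
    exact not_dvd_of_gcd_gcd_eq_one hprim Int.prime_two (by simp [ha]) (dvd_mul_right 2 B)
      (by simp [hc])
  · rw [dvd_gcd_iff] at hpg
    have ha := hp.dvd_of_dvd_pow hpg.1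
    exact not_dvd_of_gcd_gcd_eq_one hprim hp ha
      ((hp.dvd_of_dvd_mul_sq_add (ha.mul_right c) hpn).mul_left 2) (hp.dvd_of_dvd_pow hpg.2)

lemma lat1_eq_comap (a b c : ℤ) :
    lat1 a b c = ((AddSubgroup.zmultiples (2 * a ^ 2)).prod
      (AddSubgroup.zmultiples (8 * a ^ 3))).comap
        (ofColumns (4 * b * c, 4 * c * (b ^ 2 + 2 * a * c))
          (-(b ^ 2 + 2 * a * c), -(b * (b ^ 2 + 4 * a * c))) (2 * a * b, 2 * a * b ^ 2)) := by
  ext p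
  simp only [AddSubgroup.mem_comap, AddSubgroup.mem_prod, Int.mem_zmultiples_iff,
    ofColumns_apply, Prod.fst_add, Prod.snd_add, Prod.smul_fst, Prod.smul_snd, smul_eq_mul]
  exact Iff.and (by ring_nf) (by ring_nf)

lemma lat2_eq_comap (a b c : ℤ) :
    lat2 a b c = ((AddSubgroup.zmultiples (b * (b ^ 2 + 4 * a * c))).prod
      (AddSubgroup.zmultiples (b * (b ^ 2 + 4 * a * c)))).comap
        (ofColumns (c * (4 * b ^ 2 + 8 * a * c), 8 * c ^ 3) (2 * a * b ^ 2, -(2 * b ^ 2 * c))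
          (-(8 * a ^ 3), -(a * (4 * b ^ 2 + 8 * a * c)))) := by
  ext p
  simp only [AddSubgroup.mem_comap, AddSubgroup.mem_prod, Int.mem_zmultiples_iff,
    ofColumns_apply, Prod.fst_add, Prod.snd_add, Prod.smul_fst, Prod.smul_snd, smul_eq_mul]
  exact Iff.and (by ring_nf) (by ring_nf)

theorem index_lat1_of_odd {a b c : ℤ} (ha : a ≠ 0) (hb : Odd b)
    (hprim : Int.gcd (Int.gcd a b) c = 1) : (lat1 a b c).index = 8 * a.natAbs ^ 3 := by
  rw [lat1_eq_comap]
  refine Nat.eq_of_mul_eq_mul_right (Int.natAbs_pos.mpr (by positivity : 2 * a ^ 2 ≠ 0))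
    ((index_comap_ofColumns_mul_natAbs (by positivity) ?_ fun u hu => ?_).trans ?_)
  · simp only [forall_dvd_wedge_insert]
    simp only [Set.forall_mem_insert, Set.mem_singleton_iff, forall_eq, wedge_self, dvd_zero,
      and_true, wedge_mk]
    exact ⟨⟨⟨8 * c ^ 3, by ring⟩, ⟨-(8 * b * c ^ 2), by ring⟩,
        ⟨-(4 * c * (b ^ 2 + 2 * a * c)), by ring⟩, ⟨16 * a * b * c, by ring⟩⟩,
      ⟨⟨2 * b ^ 2 * c, by ring⟩, ⟨b * (b ^ 2 + 4 * a * c), by ring⟩,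
        ⟨-(4 * a * (b ^ 2 + 2 * a * c)), by ring⟩⟩,
      ⟨⟨-(2 * a * b ^ 2), by ring⟩, ⟨8 * a ^ 2 * b, by ring⟩⟩, ⟨8 * a ^ 3, by ring⟩⟩
  · exact dvd_of_dvd_mul_of_isCoprime_gcd (isCoprime_gcd_cubes_of_odd hprim hb)
      ((hu (2 * a ^ 2, 0) (by simp) (0, 8 * a ^ 3) (by simp)).trans
        (dvd_of_eq (by rw [wedge_mk]; ring)))
      ((hu (4 * b * c, 4 * c * (b ^ 2 + 2 * a * c)) (by simp)
        (-(b ^ 2 + 2 * a * c), -(b * (b ^ 2 + 4 * a * c))) (by simp)).trans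
          (dvd_of_eq (by rw [wedge_mk]; ring)))
      ((hu (-(b ^ 2 + 2 * a * c), -(b * (b ^ 2 + 4 * a * c))) (by simp) (2 * a ^ 2, 0)
        (by simp)).trans (dvd_of_eq (by rw [wedge_mk]; ring)))
  · simp only [Int.natAbs_mul, Int.natAbs_pow]
    ring

theorem index_lat1_of_even {a B c : ℤ} (ha : a ≠ 0)
    (hprim : Int.gcd (Int.gcd a (2 * B)) c = 1) : (lat1 a (2 * B) c).index = a.natAbs ^ 3 := by
  rw [lat1_eq_comap]
  refine Nat.eq_of_mul_eq_mul_right (Int.natAbs_pos.mpr (by positivity : 16 * a ^ 2 ≠ 0))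
    ((index_comap_ofColumns_mul_natAbs (by positivity) ?_ fun u hu => ?_).trans ?_)
  · simp only [forall_dvd_wedge_insert]
    simp only [Set.forall_mem_insert, Set.mem_singleton_iff, forall_eq, wedge_self, dvd_zero,
      and_true, wedge_mk]
    exact ⟨⟨⟨c ^ 3, by ring⟩, ⟨-(2 * B * c ^ 2), by ring⟩, ⟨-(c * (2 * B ^ 2 + a * c)), by ring⟩,
        ⟨4 * a * B * c, by ring⟩⟩,
      ⟨⟨B ^ 2 * c, by ring⟩, ⟨B * (B ^ 2 + a * c), by ring⟩, ⟨-(a * (2 * B ^ 2 + a * c)), by ring⟩⟩,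
      ⟨⟨-(a * B ^ 2), by ring⟩, ⟨2 * a ^ 2 * B, by ring⟩⟩, ⟨a ^ 3, by ring⟩⟩
  · exact dvd_of_dvd_mul_of_isCoprime_gcd (isCoprime_gcd_cubes_of_even hprim)
      ((hu (2 * a ^ 2, 0) (by simp) (0, 8 * a ^ 3) (by simp)).trans
        (dvd_of_eq (by rw [wedge_mk]; ring)))
      ((hu (4 * (2 * B) * c, 4 * c * ((2 * B) ^ 2 + 2 * a * c)) (by simp)
        (-((2 * B) ^ 2 + 2 * a * c), -(2 * B * ((2 * B) ^ 2 + 4 * a * c))) (by simp)).trans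
          (dvd_of_eq (by rw [wedge_mk]; ring)))
      ((hu (-((2 * B) ^ 2 + 2 * a * c), -(2 * B * ((2 * B) ^ 2 + 4 * a * c))) (by simp)
        (2 * a ^ 2, 0) (by simp)).trans (dvd_of_eq (by rw [wedge_mk]; ring)))
  · simp only [Int.natAbs_mul, Int.natAbs_pow]
    ring

theorem index_lat2_of_odd {a b c : ℤ} (hn : b * (b ^ 2 + 4 * a * c) ≠ 0) (hb : Odd b)
    (hprim : Int.gcd (Int.gcd a b) c = 1) :
    (lat2 a b c).index = (b * (b ^ 2 + 4 * a * c)).natAbs := by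
  rw [lat2_eq_comap]
  refine Nat.eq_of_mul_eq_mul_right (Int.natAbs_pos.mpr hn)
    ((index_comap_ofColumns_mul_natAbs hn ?_ fun u hu => ?_).trans ?_)
  · simp only [forall_dvd_wedge_insert]
    simp only [Set.forall_mem_insert, Set.mem_singleton_iff, forall_eq, wedge_self, dvd_zero,
      and_true, wedge_mk]
    exact ⟨⟨⟨-(8 * b * c ^ 2), by ring⟩, ⟨-(16 * a * b * c), by ring⟩, ⟨-(8 * c ^ 3), by ring⟩,
        ⟨c * (4 * b ^ 2 + 8 * a * c), by ring⟩⟩,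
      ⟨⟨-(8 * a ^ 2 * b), by ring⟩, ⟨2 * b ^ 2 * c, by ring⟩, ⟨2 * a * b ^ 2, by ring⟩⟩,
      ⟨⟨a * (4 * b ^ 2 + 8 * a * c), by ring⟩, ⟨-(8 * a ^ 3), by ring⟩⟩,
      ⟨b * (b ^ 2 + 4 * a * c), by ring⟩⟩
  · exact dvd_of_dvd_mul_of_isCoprime_gcd (isCoprime_gcd_cubes_of_odd hprim hb)
      ((hu (0, b * (b ^ 2 + 4 * a * c)) (by simp)
        (-(8 * a ^ 3), -(a * (4 * b ^ 2 + 8 * a * c))) (by simp)).trans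
          (dvd_of_eq (by rw [wedge_mk]; ring)))
      ((hu (b * (b ^ 2 + 4 * a * c), 0) (by simp) (c * (4 * b ^ 2 + 8 * a * c), 8 * c ^ 3)
        (by simp)).trans (dvd_of_eq (by rw [wedge_mk]; ring)))
      ((hu (b * (b ^ 2 + 4 * a * c), 0) (by simp) (0, b * (b ^ 2 + 4 * a * c)) (by simp)).trans
        (dvd_of_eq (by rw [wedge_mk]; ring)))
  · rw [Int.natAbs_mul]

theorem eight_mul_index_lat2_of_even {a B c : ℤ}
    (hn : 2 * B * ((2 * B) ^ 2 + 4 * a * c) ≠ 0) (hprim : Int.gcd (Int.gcd a (2 * B)) c = 1) :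
    8 * (lat2 a (2 * B) c).index = (2 * B * ((2 * B) ^ 2 + 4 * a * c)).natAbs := by
  rw [lat2_eq_comap]
  have h8 : (8 * (2 * B * ((2 * B) ^ 2 + 4 * a * c))).natAbs =
      8 * (2 * B * ((2 * B) ^ 2 + 4 * a * c)).natAbs := Int.natAbs_mul _ _
  refine Nat.eq_of_mul_eq_mul_right (Int.natAbs_pos.mpr hn) ?_
  rw [mul_comm 8, mul_assoc, ← h8, ← Int.natAbs_mul]
  refine index_comap_ofColumns_mul_natAbs (mul_ne_zero (by norm_num) hn) ?_ fun u hu => ?_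
  · simp only [forall_dvd_wedge_insert]
    simp only [Set.forall_mem_insert, Set.mem_singleton_iff, forall_eq, wedge_self, dvd_zero,
      and_true, wedge_mk]
    exact ⟨⟨⟨-(2 * B * c ^ 2), by ring⟩, ⟨-(4 * a * B * c), by ring⟩, ⟨-(c ^ 3), by ring⟩,
        ⟨c * (2 * B ^ 2 + a * c), by ring⟩⟩,
      ⟨⟨-(2 * a ^ 2 * B), by ring⟩, ⟨B ^ 2 * c, by ring⟩, ⟨a * B ^ 2, by ring⟩⟩,
      ⟨⟨a * (2 * B ^ 2 + a * c), by ring⟩, ⟨-(a ^ 3), by ring⟩⟩, ⟨B * (B ^ 2 + a * c), by ring⟩⟩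
  · exact dvd_of_dvd_mul_of_isCoprime_gcd (isCoprime_gcd_cubes_of_even hprim)
      ((hu (0, 2 * B * ((2 * B) ^ 2 + 4 * a * c)) (by simp)
        (-(8 * a ^ 3), -(a * (4 * (2 * B) ^ 2 + 8 * a * c))) (by simp)).trans
          (dvd_of_eq (by rw [wedge_mk]; ring)))
      ((hu (2 * B * ((2 * B) ^ 2 + 4 * a * c), 0) (by simp)
        (c * (4 * (2 * B) ^ 2 + 8 * a * c), 8 * c ^ 3) (by simp)).trans
          (dvd_of_eq (by rw [wedge_mk]; ring)))
      ((hu (2 * B * ((2 * B) ^ 2 + 4 * a * c), 0) (by simp)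
        (0, 2 * B * ((2 * B) ^ 2 + 4 * a * c)) (by simp)).trans
          (dvd_of_eq (by rw [wedge_mk]; ring)))

lemma odd_discrim_iff (a b c : ℤ) : Odd (b ^ 2 - 4 * a * c) ↔ Odd b := by
  simp [Int.odd_sub, parity_simps, (by decide : Even (4 : ℤ))]

open scoped Classical in
theorem lattice_indices_general (a b c : ℤ) (hprim : Int.gcd (Int.gcd a b) c = 1)
    (s : ℕ) (hs : s = if Odd (b^2 - 4*a*c) then 8 else 1) :
    (a ≠ 0 → (lat1 a b c).index = s * a.natAbs^3) ∧
    (b ≠ 0 → b^2 + 4*a*c ≠ 0 → 8 * (lat2 a b c).index = s * (b*(b^2 + 4*a*c)).natAbs) := by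
  obtain ⟨B, rfl | rfl⟩ := Int.even_or_odd' b
  · obtain rfl : s = 1 := by
      rw [hs, if_neg (by rw [odd_discrim_iff]; simp [parity_simps])]
    simp only [one_mul]
    exact ⟨fun ha => index_lat1_of_even ha hprim,
      fun hb hn => eight_mul_index_lat2_of_even (mul_ne_zero hb hn) hprim⟩
  · have hb : Odd (2 * B + 1) := odd_two_mul_add_one B
    obtain rfl : s = 8 := by rw [hs, if_pos ((odd_discrim_iff _ _ _).mpr hb)]
    exact ⟨fun ha => index_lat1_of_odd ha hb hprim,
      fun hb0 hn => by rw [index_lat2_of_odd (mul_ne_zero hb0 hn) hb hprim]⟩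

open scoped Classical in
theorem lattice_indices (a b c : ℤ) (hprim : Int.gcd (Int.gcd a b) c = 1)
    (hdisc : b^2 - 4*a*c ≠ 0)
    (s : ℕ) (hs : s = if Odd (b^2 - 4*a*c) then 8 else 1) :
    (a ≠ 0 → (lat1 a b c).index = s * a.natAbs^3) ∧
    (b ≠ 0 → b^2 + 4*a*c ≠ 0 → 8 * (lat2 a b c).index = s * (b*(b^2 + 4*a*c)).natAbs) :=
  lattice_indices_general a b c hprim s hs
end

section
/- Let f = αx² + βxy + γy² be an integral binary quadratic form with Δ(f) ≠ 0 and α ≠ 0, and let F be an integral binary quartic form with F_{M_f} = F and Δ(F) ≠ 0. Suppose F is reducible of type 1, i.e., F = m·p·p_{M_f} for some nonzero rational number m and some integral binary quadratic form p, where p_{M_f}(x,y) = (−Δ(f))^{−1}·p(βx+2γy, −2αx−βy). Then L_f(F)² + 4K_f(F) is the square of an integer. -/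
open Polynomial

/-!
Write `F = e · p · p_{M_f}` with `e = m / (-Δ(f))`. Expanding, the coefficients of `F`, and hence
`L = L_f(F)`, `K = K_f(F)`, `I(F)` and `J(F)`, are explicit in `α, β, γ, e` and the coefficients
of `p`, and three polynomial identities follow. First, `L` is a root of the resolvent cubic
`X³ - 3 I X + J`, which is monic with integer coefficients, so `L ∈ ℤ`. Second,
`L² + 4K = 12 I - 3 L²`, so `L² + 4K ∈ ℤ`. Third, `L² + 4K = (12 e Res(f, p))²` is the square of a
rational number, and an integer that is a rational square is an integer square.
-/

lemma Rat.exists_intCast_eq_of_cubic_eq_zero {q : ℚ} {A B : ℤ} (h : q ^ 3 + A * q + B = 0) :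
    ∃ z : ℤ, (z : ℚ) = q :=
  IsIntegrallyClosed.isIntegral_iff.mp
    ⟨X ^ 3 + C A * X + C B, by monicity!, by rw [← aeval_def]; simpa using h⟩

section BinaryForms

variable {R : Type*} [CommRing R]

lemma qdval_mul_qdval (p2 p1 p0 q2 q1 q0 x y : R) :
    qdval p2 p1 p0 x y * qdval q2 q1 q0 x y =
      qval (p2 * q2) (p2 * q1 + p1 * q2) (p2 * q0 + p1 * q1 + p0 * q2) (p1 * q0 + p0 * q1)
        (p0 * q0) x y := by
  unfold qdval qval; ring

lemma qdval_comp_Mf (a b c p2 p1 p0 x y : R) :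
    qdval p2 p1 p0 (b * x + 2 * c * y) (-(2 * a * x) - b * y) =
      qdval (b ^ 2 * p2 - 2 * a * b * p1 + 4 * a ^ 2 * p0)
        (4 * b * c * p2 - (b ^ 2 + 4 * a * c) * p1 + 4 * a * b * p0)
        (4 * c ^ 2 * p2 - 2 * b * c * p1 + b ^ 2 * p0) x y := by
  unfold qdval; ring

lemma smul_qval (e a4 a3 a2 a1 a0 x y : R) :
    e * qval a4 a3 a2 a1 a0 x y = qval (e * a4) (e * a3) (e * a2) (e * a1) (e * a0) x y := by
  unfold qval; ring

lemma qval_coeffs_eq_of_forall {K : Type*} [Field K] [CharZero K]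
    {a4 a3 a2 a1 a0 b4 b3 b2 b1 b0 : K}
    (h : ∀ x y, qval a4 a3 a2 a1 a0 x y = qval b4 b3 b2 b1 b0 x y) :
    a4 = b4 ∧ a3 = b3 ∧ a2 = b2 ∧ a1 = b1 ∧ a0 = b0 := by
  have h10 := h 1 0; have h01 := h 0 1; have h11 := h 1 1
  have hm11 := h (-1) 1; have h21 := h 2 1; have hm21 := h (-2) 1
  simp only [qval] at *
  refine ⟨by linear_combination h10, ?_, ?_, ?_, by linear_combination h01⟩
  · linear_combination (1/12) * h21 - (1/12) * hm21 - (1/6) * h11 + (1/6) * hm11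
  · linear_combination (1/2) * h11 + (1/2) * hm11 - h10 - h01
  · linear_combination (2/3) * h11 - (2/3) * hm11 - (1/12) * h21 + (1/12) * hm21

end BinaryForms

section TypeOne

variable {K : Type*} [Field K]

def Lf (a b c a4 a3 a2 : K) : K :=
  -(12 * c * a4 - 3 * b * a3 + 2 * a * a2) / (2 * a)

def Kf (a b c a4 a3 a2 : K) : K :=
  (72 * b ^ 2 * c * a4 ^ 2 + 9 * a * (b ^ 2 + 4 * a * c) * a3 ^ 2 + 8 * a ^ 3 * a2 ^ 2
    - 18 * b * (b ^ 2 + 4 * a * c) * a4 * a3 + 12 * a * (3 * b ^ 2 - 4 * a * c) * a4 * a2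
    - 24 * a ^ 2 * b * a3 * a2) / (4 * a ^ 3)

def qdResultant (a b c p2 p1 p0 : K) : K :=
  (a * p0 - c * p2) ^ 2 - (a * p1 - b * p2) * (b * p0 - c * p1)

variable [CharZero K] {a b c e p2 p1 p0 a4 a3 a2 a1 a0 : K}

lemma coeffs_eq_of_type1 (hF : ∀ x y, qval a4 a3 a2 a1 a0 x y =
      e * qdval p2 p1 p0 x y * qdval p2 p1 p0 (b * x + 2 * c * y) (-(2 * a * x) - b * y)) :
    a4 = e * (p2 * (b ^ 2 * p2 - 2 * a * b * p1 + 4 * a ^ 2 * p0)) ∧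
    a3 = e * (p2 * (4 * b * c * p2 - (b ^ 2 + 4 * a * c) * p1 + 4 * a * b * p0)
      + p1 * (b ^ 2 * p2 - 2 * a * b * p1 + 4 * a ^ 2 * p0)) ∧
    a2 = e * (p2 * (4 * c ^ 2 * p2 - 2 * b * c * p1 + b ^ 2 * p0)
      + p1 * (4 * b * c * p2 - (b ^ 2 + 4 * a * c) * p1 + 4 * a * b * p0)
      + p0 * (b ^ 2 * p2 - 2 * a * b * p1 + 4 * a ^ 2 * p0)) ∧
    a1 = e * (p1 * (4 * c ^ 2 * p2 - 2 * b * c * p1 + b ^ 2 * p0)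
      + p0 * (4 * b * c * p2 - (b ^ 2 + 4 * a * c) * p1 + 4 * a * b * p0)) ∧
    a0 = e * (p0 * (4 * c ^ 2 * p2 - 2 * b * c * p1 + b ^ 2 * p0)) :=
  qval_coeffs_eq_of_forall fun x y => by
    rw [hF, qdval_comp_Mf, mul_assoc, qdval_mul_qdval, smul_qval]

variable (ha : a ≠ 0) (hF : ∀ x y, qval a4 a3 a2 a1 a0 x y =
      e * qdval p2 p1 p0 x y * qdval p2 p1 p0 (b * x + 2 * c * y) (-(2 * a * x) - b * y))
include ha hF

lemma Lf_cubic_eq_zero_of_type1 :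
    Lf a b c a4 a3 a2 ^ 3 - 3 * Iinv a4 a3 a2 a1 a0 * Lf a b c a4 a3 a2
      + Jinv a4 a3 a2 a1 a0 = 0 := by
  obtain ⟨rfl, rfl, rfl, rfl, rfl⟩ := coeffs_eq_of_type1 hF
  unfold Lf Iinv Jinv
  field_simp
  ring

lemma sq_Lf_add_four_Kf_of_type1 :
    Lf a b c a4 a3 a2 ^ 2 + 4 * Kf a b c a4 a3 a2
      = 12 * Iinv a4 a3 a2 a1 a0 - 3 * Lf a b c a4 a3 a2 ^ 2 := by
  obtain ⟨rfl, rfl, rfl, rfl, rfl⟩ := coeffs_eq_of_type1 hF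
  unfold Lf Kf Iinv
  field_simp
  ring

lemma sq_Lf_add_four_Kf_eq_sq_resultant :
    Lf a b c a4 a3 a2 ^ 2 + 4 * Kf a b c a4 a3 a2 = (12 * e * qdResultant a b c p2 p1 p0) ^ 2 := by
  obtain ⟨rfl, rfl, rfl, -, -⟩ := coeffs_eq_of_type1 hF
  unfold Lf Kf qdResultant
  field_simp
  ring

end TypeOne

theorem type1_implies_square_general (a b c : ℤ) (ha : a ≠ 0)
    (a4 a3 a2 a1 a0 : ℤ)
    -- `F` is reducible of type 1: `F = m · p · p_{M_f}`
    (htype1 : ∃ m : ℚ, m ≠ 0 ∧ ∃ p2 p1 p0 : ℤ, ∀ x y : ℚ,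
      qval (a4:ℚ) (a3:ℚ) (a2:ℚ) (a1:ℚ) (a0:ℚ) x y
        = m * qdval (p2:ℚ) (p1:ℚ) (p0:ℚ) x y *
          (qdval (p2:ℚ) (p1:ℚ) (p0:ℚ) ((b:ℚ)*x + 2*(c:ℚ)*y) (-(2*(a:ℚ)*x) - (b:ℚ)*y)
            / (-((b:ℚ)^2 - 4*(a:ℚ)*(c:ℚ)))))
    (L K : ℚ)
    (hL : L = -(12*(c:ℚ)*(a4:ℚ) - 3*(b:ℚ)*(a3:ℚ) + 2*(a:ℚ)*(a2:ℚ)) / (2*(a:ℚ)))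
    (hK : K = (72*(b:ℚ)^2*(c:ℚ)*(a4:ℚ)^2 + 9*(a:ℚ)*((b:ℚ)^2 + 4*(a:ℚ)*(c:ℚ))*(a3:ℚ)^2
      + 8*(a:ℚ)^3*(a2:ℚ)^2 - 18*(b:ℚ)*((b:ℚ)^2 + 4*(a:ℚ)*(c:ℚ))*(a4:ℚ)*(a3:ℚ)
      + 12*(a:ℚ)*(3*(b:ℚ)^2 - 4*(a:ℚ)*(c:ℚ))*(a4:ℚ)*(a2:ℚ)
      - 24*(a:ℚ)^2*(b:ℚ)*(a3:ℚ)*(a2:ℚ)) / (4*(a:ℚ)^3)) :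
    ∃ n : ℤ, L^2 + 4*K = (n:ℚ)^2 := by
  obtain ⟨m, -, p2, p1, p0, hF⟩ := htype1
  have haq : (a : ℚ) ≠ 0 := Int.cast_ne_zero.mpr ha
  have hF' : ∀ x y : ℚ, qval (a4 : ℚ) a3 a2 a1 a0 x y =
      m / -((b : ℚ) ^ 2 - 4 * a * c) * qdval (p2 : ℚ) p1 p0 x y *
        qdval (p2 : ℚ) p1 p0 (b * x + 2 * c * y) (-(2 * a * x) - b * y) := fun x y => by
    rw [hF]; ring
  change L = Lf (a:ℚ) b c a4 a3 a2 at hL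
  change K = Kf (a:ℚ) b c a4 a3 a2 at hK
  have hI : ((Iinv a4 a3 a2 a1 a0 : ℤ) : ℚ) = Iinv (a4 : ℚ) a3 a2 a1 a0 := by
    simp [Iinv]
  have hJ : ((Jinv a4 a3 a2 a1 a0 : ℤ) : ℚ) = Jinv (a4 : ℚ) a3 a2 a1 a0 := by
    simp [Jinv]
  obtain ⟨l, hl⟩ := Rat.exists_intCast_eq_of_cubic_eq_zero
    (A := -3 * Iinv a4 a3 a2 a1 a0) (B := Jinv a4 a3 a2 a1 a0) (q := L) (by
      push_cast [hI, hJ, hL]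
      linear_combination Lf_cubic_eq_zero_of_type1 haq hF')
  have hsum : L ^ 2 + 4 * K = ((12 * Iinv a4 a3 a2 a1 a0 - 3 * l ^ 2 : ℤ) : ℚ) := by
    push_cast [hI, hl]
    rw [hL, hK, sq_Lf_add_four_Kf_of_type1 haq hF']
  obtain ⟨n, hn⟩ : IsSquare (12 * Iinv a4 a3 a2 a1 a0 - 3 * l ^ 2) := by
    rw [← Rat.isSquare_intCast_iff, ← hsum, hL, hK, sq_Lf_add_four_Kf_eq_sq_resultant haq hF']
    exact IsSquare.sq _
  exact ⟨n, by rw [hsum, hn]; push_cast; ring⟩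

theorem type1_implies_square (a b c : ℤ) (hdisc : b^2 - 4*a*c ≠ 0) (ha : a ≠ 0)
    (a4 a3 a2 a1 a0 : ℤ) (hfix : fixedMf a b c a4 a3 a2 a1 a0)
    (hΔ : 4 * (Iinv a4 a3 a2 a1 a0)^3 - (Jinv a4 a3 a2 a1 a0)^2 ≠ 0)
    -- `F` is reducible of type 1: `F = m · p · p_{M_f}`
    (htype1 : ∃ m : ℚ, m ≠ 0 ∧ ∃ p2 p1 p0 : ℤ, ∀ x y : ℚ,
      qval (a4:ℚ) (a3:ℚ) (a2:ℚ) (a1:ℚ) (a0:ℚ) x y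
        = m * qdval (p2:ℚ) (p1:ℚ) (p0:ℚ) x y *
          (qdval (p2:ℚ) (p1:ℚ) (p0:ℚ) ((b:ℚ)*x + 2*(c:ℚ)*y) (-(2*(a:ℚ)*x) - (b:ℚ)*y)
            / (-((b:ℚ)^2 - 4*(a:ℚ)*(c:ℚ)))))
    (L K : ℚ)
    (hL : L = -(12*(c:ℚ)*(a4:ℚ) - 3*(b:ℚ)*(a3:ℚ) + 2*(a:ℚ)*(a2:ℚ)) / (2*(a:ℚ)))
    (hK : K = (72*(b:ℚ)^2*(c:ℚ)*(a4:ℚ)^2 + 9*(a:ℚ)*((b:ℚ)^2 + 4*(a:ℚ)*(c:ℚ))*(a3:ℚ)^2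
      + 8*(a:ℚ)^3*(a2:ℚ)^2 - 18*(b:ℚ)*((b:ℚ)^2 + 4*(a:ℚ)*(c:ℚ))*(a4:ℚ)*(a3:ℚ)
      + 12*(a:ℚ)*(3*(b:ℚ)^2 - 4*(a:ℚ)*(c:ℚ))*(a4:ℚ)*(a2:ℚ)
      - 24*(a:ℚ)^2*(b:ℚ)*(a3:ℚ)*(a2:ℚ)) / (4*(a:ℚ)^3)) :
    ∃ n : ℤ, L^2 + 4*K = (n:ℚ)^2 :=
  type1_implies_square_general a b c ha a4 a3 a2 a1 a0 htype1 L K hL hK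
end

section
/- Let f = αx² + βxy + γy² be a real binary quadratic form with Δ(f) ≠ 0. Let p(x,y) = p₂x² + p₁xy + p₀y² be a nonzero complex binary quadratic form and suppose that (−Δ(f))^{−1}·p(βx+2γy, −2αx−βy) = λ·p(x,y) for some λ ∈ ℂ with λ ≠ 0. Then λ = 1 or λ = −1; and if α ≠ 0, then λ = −1 if and only if p₀ = (βp₁ − 2γp₂)/(2α), and λ = 1 if and only if p = (p₂/α)·f. -/
theorem quadratic_eigenform (a b c : ℝ) (hdisc : b^2 - 4*a*c ≠ 0)
    (p2 p1 p0 : ℂ) (hp : ¬(p2 = 0 ∧ p1 = 0 ∧ p0 = 0)) (lam : ℂ) (hlam : lam ≠ 0)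
    (heig : ∀ x y : ℂ,
      (-(((b:ℂ))^2 - 4*(a:ℂ)*(c:ℂ)))⁻¹ *
        qdval p2 p1 p0 ((b:ℂ)*x + 2*(c:ℂ)*y) (-(2*(a:ℂ)*x) - (b:ℂ)*y)
      = lam * qdval p2 p1 p0 x y) :
    (lam = 1 ∨ lam = -1) ∧
    (a ≠ 0 →
      ((lam = -1 ↔ p0 = ((b:ℂ)*p1 - 2*(c:ℂ)*p2) / (2*(a:ℂ))) ∧
       (lam = 1 ↔ (p1 = (p2/(a:ℂ)) * (b:ℂ) ∧ p0 = (p2/(a:ℂ)) * (c:ℂ))))) := by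
  have hD : ((b:ℂ)^2 - 4*(a:ℂ)*(c:ℂ)) ≠ 0 := by
    intro h; apply hdisc; exact_mod_cast h
  have hnD : (4*(a:ℂ)*(c:ℂ) - (b:ℂ)^2) ≠ 0 := by
    intro h; apply hD; linear_combination -h
  have e2 := heig 1 0
  have e0 := heig 0 1
  have e1 := heig 1 1
  simp only [qdval] at e2 e0 e1
  field_simp at e2 e0 e1
  have hsq : lam^2 = 1 := by
    have D2 : ∀ q : ℂ, q ≠ 0 → ((b:ℂ)^2-4*a*c)^2*(lam^2*q) = ((b:ℂ)^2-4*a*c)^2*q → lam^2 = 1 := by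
      intro q hq h
      have h2 := mul_left_cancel₀ (pow_ne_zero 2 hD) h
      exact mul_right_cancel₀ hq (by linear_combination h2)
    rcases not_and_or.mp hp with h2 | h10
    · refine D2 p2 h2 ?_
      linear_combination -((((b:ℂ)^2-4*a*c)*lam - (b:ℂ)^2)*e2 + 2*(a:ℂ)*b*(e1-e2-e0) - 4*(a:ℂ)^2*e0)
    · rcases not_and_or.mp h10 with h1 | h0
      · refine D2 p1 h1 ?_
        linear_combination -((((b:ℂ)^2-4*a*c)*lam + (b:ℂ)^2+4*a*c)*(e1-e2-e0) - 4*(b:ℂ)*c*e2 - 4*(a:ℂ)*b*e0)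
      · refine D2 p0 h0 ?_
        linear_combination -((((b:ℂ)^2-4*a*c)*lam - (b:ℂ)^2)*e0 + 2*(b:ℂ)*c*(e1-e2-e0) - 4*(c:ℂ)^2*e2)
  have hpm : lam = 1 ∨ lam = -1 := by
    rcases mul_eq_zero.mp (show (lam-1)*(lam+1) = 0 by linear_combination hsq) with h | h
    · left; linear_combination h
    · right; linear_combination h
  refine ⟨hpm, fun ha => ?_⟩
  have haC : (a:ℂ) ≠ 0 := by exact_mod_cast ha
  have cancel : ∀ u v w : ℂ, u ≠ 0 → u*(v-w) = 0 → v = w := fun u v w hu h =>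
    sub_eq_zero.mp ((mul_eq_zero.mp h).resolve_left hu)
  -- forward implications
  have hneg : lam = -1 → p0 = ((b:ℂ)*p1 - 2*(c:ℂ)*p2) / (2*(a:ℂ)) := by
    intro h; subst h
    rw [eq_div_iff (by simpa using haC : (2*(a:ℂ)) ≠ 0)]
    refine cancel (2*(a:ℂ)) _ _ (by simpa using haC) ?_
    linear_combination -e2
  have hpos : lam = 1 → (p1 = (p2/(a:ℂ)) * (b:ℂ) ∧ p0 = (p2/(a:ℂ)) * (c:ℂ)) := by
    intro h; subst h
    constructor
    · have key : p1 * (a:ℂ) = p2 * (b:ℂ) :=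
        cancel ((b:ℂ)^2-4*a*c) _ _ hD (by linear_combination -((-(b:ℂ)/2)*e2 + ((a:ℂ)/2)*(e1-e2-e0)))
      field_simp
      linear_combination key
    · have key : p0 * (a:ℂ) = p2 * (c:ℂ) :=
        cancel ((b:ℂ)^2-4*a*c) _ _ hD (by linear_combination -((-(c:ℂ))*e2 + ((b:ℂ)/4)*(e1-e2-e0)))
      field_simp
      linear_combination key
  -- incompatibility of the two coefficient conditions
  have hinc : (p1 = (p2/(a:ℂ)) * (b:ℂ) ∧ p0 = (p2/(a:ℂ)) * (c:ℂ)) →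
      p0 = ((b:ℂ)*p1 - 2*(c:ℂ)*p2) / (2*(a:ℂ)) → False := by
    rintro ⟨h1, h0⟩ h0'
    apply hp
    have hp2 : p2 = 0 := by
      have : ((b:ℂ)^2 - 4*a*c) * p2 = 0 := by
        field_simp at h1 h0 h0'
        linear_combination -(b:ℂ)*h1 + 2*(a:ℂ)*h0 - (a:ℂ)*h0'
      rcases mul_eq_zero.mp this with h' | h'
      · exact absurd h' hD
      · exact h'
    rw [hp2] at h1 h0
    simp at h1 h0
    exact ⟨hp2, h1, h0⟩
  constructor
  · constructor
    · exact hneg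
    · intro h0'
      rcases hpm with h | h
      · exact absurd h0' (fun _ => hinc (hpos h) h0')
      · exact h
  · constructor
    · exact hpos
    · intro hcond
      rcases hpm with h | h
      · exact h
      · exact absurd (hneg h) (fun h' => hinc hcond h')
end

section
/- Let f = αx² + βxy + γy² be an integral primitive binary quadratic form with Δ(f) ≠ 0 and α > 0, and let T ∈ O_f(ℤ) with T ≠ ±I be an element of finite order. If det(T) = 1, then f is GL₂(ℤ)-equivalent to x² + y², to x² + xy + y², or to a form ax² + bxy − ay² for some integers a, b. If det(T) = −1, then f is GL₂(ℤ)-equivalent to xy, to x² − y², to a form ax² + cy², or to a form ax² + bxy + ay², for some integers a, b, c. -/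
/-- `GL₂(ℤ)`-equivalence of integral binary quadratic forms:
`g = ± f ∘ T` for some `T ∈ GL₂(ℤ)`. -/
def quadEquiv (a b c a' b' c' : ℤ) : Prop :=
  ∃ t1 t2 t3 t4 : ℤ, (t1*t4 - t2*t3 = 1 ∨ t1*t4 - t2*t3 = -1) ∧
    ((∀ x y : ℤ, qdval a' b' c' x y = qdval a b c (t1*x + t2*y) (t3*x + t4*y)) ∨
     (∀ x y : ℤ, qdval a' b' c' x y = -qdval a b c (t1*x + t2*y) (t3*x + t4*y)))

/-!
A finite-order `T ∈ GL₂(ℤ)` other than `±1` is not scalar. By Cayley–Hamilton,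
`T ^ n = U_n T - det T • U_{n-1}` with `U` the Lucas sequence of `(tr T, det T)`, so `T ^ n = 1`
forces `U_n = 0`, which happens only if `|tr T| ≤ 1` (when `det T = 1`) or `tr T = 0`
(when `det T = -1`).

If `det T = 1`, then `v ↦ det (v, T v)` is a definite form of discriminant `tr T ^ 2 - 4 ∈ {-3, -4}`,
hence represents `±1`, and `(v, T v)` is a basis of `ℤ²`. If `det T = -1`, then `T` is an
involution fixing a primitive vector `v`, which completes to a basis in which `T` is `diag(1, -1)`
or the swap `!![0, 1; 1, 0]`. Reading off `f` in these bases with `f ∘ T = ±f` gives the listed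
shapes; where one coefficient divides the other two it is `±1` because `f` is primitive.
-/

open Matrix

def lucasU {R : Type*} [CommRing R] (t d : R) : ℕ → R
  | 0 => 0
  | 1 => 1
  | k + 2 => t * lucasU t d (k + 1) - d * lucasU t d k

section Lucas

variable {R : Type*} [CommRing R]

theorem lucasU_neg (t d : R) (k : ℕ) : lucasU (-t) d k = (-1) ^ (k + 1) * lucasU t d k := by
  induction k using Nat.strong_induction_on with
  | _ k ih =>
    match k with
    | 0 => simp [lucasU]
    | 1 => simp [lucasU]
    | k + 2 =>
      simp only [lucasU, ih (k + 1) (by omega), ih k (by omega)]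
      ring

variable [LinearOrder R] [IsStrictOrderedRing R] {t d : R}

theorem lucasU_nonneg_and_le_succ (ht : 1 ≤ t) (hd : d + 1 ≤ t) (k : ℕ) :
    0 ≤ lucasU t d k ∧ lucasU t d k ≤ lucasU t d (k + 1) := by
  induction k with
  | zero => simp [lucasU]
  | succ k ih =>
    obtain ⟨h0, h1⟩ := ih
    refine ⟨h0.trans h1, ?_⟩
    show lucasU t d (k + 1) ≤ t * lucasU t d (k + 1) - d * lucasU t d k
    rcases le_total d 0 with hd0 | hd0 <;> nlinarith

theorem lucasU_succ_pos (ht : 1 ≤ t) (hd : d + 1 ≤ t) (k : ℕ) : 0 < lucasU t d (k + 1) := by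
  induction k with
  | zero => simp [lucasU]
  | succ k ih => exact ih.trans_le (lucasU_nonneg_and_le_succ ht hd (k + 1)).2

theorem lucasU_succ_ne_zero (ht : 1 ≤ |t|) (hd : d + 1 ≤ |t|) (k : ℕ) : lucasU t d (k + 1) ≠ 0 := by
  rcases abs_choice t with h | h <;> rw [h] at ht hd
  · exact (lucasU_succ_pos ht hd k).ne'
  · have hpos := lucasU_succ_pos ht hd k
    rw [lucasU_neg] at hpos
    exact right_ne_zero_of_mul hpos.ne'

end Lucas

namespace Matrix

variable {R : Type*} [CommRing R]

theorem det_of_fin_two (v w : Fin 2 → R) : (of ![v, w]).det = v 0 * w 1 - v 1 * w 0 := by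
  simp [det_fin_two]

theorem mulVec_fin_two_apply (M : Matrix (Fin 2) (Fin 2) R) (v : Fin 2 → R) (i : Fin 2) :
    (M *ᵥ v) i = M i 0 * v 0 + M i 1 * v 1 :=
  vec2_dotProduct _ _

theorem det_of_mulVec (M : Matrix (Fin 2) (Fin 2) R) (v w : Fin 2 → R) :
    (of ![M *ᵥ v, M *ᵥ w]).det = M.det * (of ![v, w]).det := by
  simp only [det_of_fin_two, mulVec_fin_two_apply, det_fin_two M]
  ring

theorem eq_det_smul_add_det_smul {v w : Fin 2 → R} (hvw : (of ![v, w]).det = 1) (x : Fin 2 → R) :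
    x = (of ![x, w]).det • v + (of ![v, x]).det • w := by
  rw [det_of_fin_two] at hvw
  refine funext (Fin.forall_fin_two.mpr ⟨?_, ?_⟩) <;>
    simp only [det_of_fin_two, Pi.add_apply, Pi.smul_apply, smul_eq_mul] <;>
    linear_combination (-x _) * hvw

theorem pow_succ_eq_lucasU (M : Matrix (Fin 2) (Fin 2) R) (k : ℕ) :
    M ^ (k + 1) = lucasU M.trace M.det (k + 1) • M - (M.det * lucasU M.trace M.det k) • 1 := by
  induction k with
  | zero => simp [lucasU]
  | succ k ih =>
    rw [pow_succ, ih]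
    ext i j
    fin_cases i <;> fin_cases j <;>
      simp [lucasU, Matrix.mul_apply, Fin.sum_univ_two, trace_fin_two, det_fin_two] <;> ring

theorem mulVec_mulVec_self (M : Matrix (Fin 2) (Fin 2) R) (v : Fin 2 → R) :
    M *ᵥ (M *ᵥ v) = M.trace • M *ᵥ v - M.det • v := by
  rw [mulVec_mulVec, ← sq, pow_succ_eq_lucasU M 1]
  simp [lucasU, sub_mulVec, smul_mulVec]

theorem eq_smul_one_of_pow_eq_one [IsDomain R] {M : Matrix (Fin 2) (Fin 2) R} {k : ℕ}
    (hM : M ^ (k + 1) = 1) (hu : lucasU M.trace M.det (k + 1) ≠ 0) : M = M 0 0 • 1 := by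
  rw [pow_succ_eq_lucasU] at hM
  have h00 := congrFun₂ hM 0 0
  have h11 := congrFun₂ hM 1 1
  have h01 := congrFun₂ hM 0 1
  have h10 := congrFun₂ hM 1 0
  simp only [sub_apply, smul_apply, smul_eq_mul, one_apply_eq, one_apply_ne, ne_eq, zero_ne_one,
    one_ne_zero, not_false_eq_true, mul_one, mul_zero, sub_zero, mul_eq_zero] at h00 h11 h01 h10
  have hdiag : M 0 0 = M 1 1 :=
    sub_eq_zero.mp ((mul_eq_zero.mp (by linear_combination h00 - h11 :
      lucasU M.trace M.det (k + 1) * (M 0 0 - M 1 1) = 0)).resolve_left hu)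
  ext i j
  fin_cases i <;> fin_cases j <;> simp [h01.resolve_left hu, h10.resolve_left hu, hdiag]

theorem abs_trace_le_one_of_pow_eq_one {M : Matrix (Fin 2) (Fin 2) ℤ} (hdet : M.det = 1)
    (h1 : M ≠ 1) (h2 : M ≠ -1) {n : ℕ} (hn : 0 < n) (hM : M ^ n = 1) : |M.trace| ≤ 1 := by
  obtain ⟨k, rfl⟩ : ∃ k, n = k + 1 := ⟨n - 1, by omega⟩
  by_contra! ht
  have hs := eq_smul_one_of_pow_eq_one hM (lucasU_succ_ne_zero (by omega) (by omega) k)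
  have hsq : M 0 0 ^ 2 = 1 := by
    have := congrArg det hs
    rwa [det_smul, det_one, hdet, Fintype.card_fin, mul_one, eq_comm] at this
  rcases sq_eq_one_iff.mp hsq with h | h <;> rw [h] at hs <;> simp_all

theorem trace_eq_zero_of_pow_eq_one {M : Matrix (Fin 2) (Fin 2) ℤ} (hdet : M.det = -1)
    {n : ℕ} (hn : 0 < n) (hM : M ^ n = 1) : M.trace = 0 := by
  obtain ⟨k, rfl⟩ : ∃ k, n = k + 1 := ⟨n - 1, by omega⟩
  by_contra ht
  have hs := eq_smul_one_of_pow_eq_one hM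
    (lucasU_succ_ne_zero (Int.one_le_abs ht) (by rw [hdet]; positivity) k)
  have hsq : M 0 0 ^ 2 = -1 := by
    have := congrArg det hs
    rwa [det_smul, det_one, hdet, Fintype.card_fin, mul_one, eq_comm] at this
  nlinarith [sq_nonneg (M 0 0)]

end Matrix

theorem exists_qdval_eq_one {A B C : ℤ} (hA : 0 < A) (hΔ : B ^ 2 - 4 * A * C < 0)
    (hΔ4 : -4 ≤ B ^ 2 - 4 * A * C) : ∃ x y, qdval A B C x y = 1 := by
  obtain rfl | hA2 : A = 1 ∨ 2 ≤ A := by omega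
  · exact ⟨1, 0, by simp [qdval]⟩
  -- reduce to the equivalent form `(C', B', A)` with `|B'| ≤ A`; then `0 < C' < A`
  obtain ⟨k, hk⟩ : ∃ k, k = -((B + A) / (2 * A)) := ⟨_, rfl⟩
  obtain ⟨B', hB'⟩ : ∃ B', B' = B + 2 * A * k := ⟨_, rfl⟩
  obtain ⟨C', hC'⟩ : ∃ C', C' = qdval A B C k 1 := ⟨_, rfl⟩
  have hB'mod : B' = (B + A) % (2 * A) - A := by rw [hB', hk, Int.emod_def]; ring
  have hB'lo : -A ≤ B' := by have := Int.emod_nonneg (B + A) (by omega : 2 * A ≠ 0); omega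
  have hB'hi : B' < A := by have := Int.emod_lt_of_pos (B + A) (by omega : 0 < 2 * A); omega
  have hΔ' : B' ^ 2 - 4 * C' * A = B ^ 2 - 4 * A * C := by rw [hB', hC', qdval]; ring
  have hC'pos : 0 < C' := by nlinarith
  have hC'A : C' < A := by nlinarith
  obtain ⟨x, y, hxy⟩ := exists_qdval_eq_one hC'pos (hΔ'.trans_lt hΔ) (hΔ4.trans hΔ'.ge)
  refine ⟨y + k * x, x, ?_⟩
  rw [hB', hC'] at hxy
  simp only [qdval] at hxy ⊢
  linear_combination hxy
termination_by A.toNat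
decreasing_by omega

theorem exists_qdval_eq_one_or_neg_one {A B C : ℤ} (hΔ : B ^ 2 - 4 * A * C < 0)
    (hΔ4 : -4 ≤ B ^ 2 - 4 * A * C) : ∃ x y, qdval A B C x y = 1 ∨ qdval A B C x y = -1 := by
  rcases lt_trichotomy A 0 with hA | rfl | hA
  · obtain ⟨x, y, h⟩ := exists_qdval_eq_one (A := -A) (B := -B) (C := -C) (by omega)
      (by linarith) (by linarith)
    exact ⟨x, y, Or.inr (by simp only [qdval] at h ⊢; linarith)⟩
  · nlinarith
  · obtain ⟨x, y, h⟩ := exists_qdval_eq_one hA hΔ hΔ4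
    exact ⟨x, y, Or.inl h⟩

def qform (a b c : ℤ) : QuadraticForm ℤ (Fin 2 → ℤ) :=
  LinearMap.BilinMap.toQuadraticMap (toLinearMap₂' ℤ !![a, b; 0, c])

section Forms

open QuadraticMap

variable {a b c : ℤ}

theorem qform_apply (v : Fin 2 → ℤ) : qform a b c v = qdval a b c (v 0) (v 1) := by
  simp only [qform, LinearMap.BilinMap.toQuadraticMap_apply, toLinearMap₂'_apply', vec2_dotProduct,
    mulVec_fin_two_apply, of_apply, cons_val_zero, cons_val_one, cons_val_fin_one, qdval]
  ring

theorem polar_qform (v w : Fin 2 → ℤ) : polar (qform a b c) v w =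
    2 * a * v 0 * w 0 + b * (v 0 * w 1 + v 1 * w 0) + 2 * c * v 1 * w 1 := by
  simp only [polar, qform_apply, qdval, Pi.add_apply]
  ring

theorem polar_mulVec {T : Matrix (Fin 2) (Fin 2) ℤ} {ε : ℤ}
    (hT : ∀ v, qform a b c (T *ᵥ v) = ε * qform a b c v) (v w : Fin 2 → ℤ) :
    polar (qform a b c) (T *ᵥ v) (T *ᵥ w) = ε * polar (qform a b c) v w := by
  simp only [polar, ← mulVec_add, hT]
  ring

theorem quadEquiv_of_basis {v w : Fin 2 → ℤ} (hvw : IsUnit (of ![v, w]).det) {ε A B C : ℤ}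
    (hε : IsUnit ε) (hA : qform a b c v = ε * A) (hB : polar (qform a b c) v w = ε * B)
    (hC : qform a b c w = ε * C) : quadEquiv a b c A B C := by
  rw [det_of_fin_two, Int.isUnit_iff] at hvw
  refine ⟨v 0, w 0, v 1, w 1, by rwa [mul_comm (w 0)], ?_⟩
  rw [qform_apply] at hA hC
  rw [polar_qform] at hB
  simp only [qdval] at hA hC ⊢
  rcases Int.isUnit_iff.mp hε with rfl | rfl
  · exact Or.inl fun x y => by linear_combination (-x ^ 2) * hA - x * y * hB - y ^ 2 * hC
  · exact Or.inr fun x y => by linear_combination x ^ 2 * hA + x * y * hB + y ^ 2 * hC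

theorem isUnit_of_dvd_basis (hprim : Int.gcd (Int.gcd a b) c = 1) {v w : Fin 2 → ℤ}
    (hvw : IsUnit (of ![v, w]).det) {k : ℤ} (hA : k ∣ qform a b c v)
    (hB : k ∣ polar (qform a b c) v w) (hC : k ∣ qform a b c w) : IsUnit k := by
  have hcomb : ∀ x y z : ℤ,
      k ∣ x * qform a b c v + y * polar (qform a b c) v w + z * qform a b c w :=
    fun x y z => dvd_add (dvd_add (hA.mul_left x) (hB.mul_left y)) (hC.mul_left z)
  have hdet : (v 0 * w 1 - v 1 * w 0) ^ 2 = 1 := by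
    rw [det_of_fin_two] at hvw
    rcases Int.isUnit_iff.mp hvw with h | h <;> rw [h] <;> norm_num
  simp only [qform_apply, polar_qform, qdval] at hcomb
  -- `±(w 1 • v - v 1 • w)` and `±(v 0 • w - w 0 • v)` are the standard basis vectors
  have ha : k ∣ a := by
    convert hcomb (w 1 ^ 2) (-(w 1 * v 1)) (v 1 ^ 2) using 1
    linear_combination (-a) * hdet
  have hb : k ∣ b := by
    convert hcomb (-2 * w 1 * w 0) (w 1 * v 0 + v 1 * w 0) (-2 * v 1 * v 0) using 1
    linear_combination (-b) * hdet
  have hc : k ∣ c := by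
    convert hcomb (w 0 ^ 2) (-(w 0 * v 0)) (v 0 ^ 2) using 1
    linear_combination (-c) * hdet
  have := Int.dvd_coe_gcd (Int.dvd_coe_gcd ha hb) hc
  rw [hprim] at this
  exact isUnit_of_dvd_one (by exact_mod_cast this)

end Forms

section Involution

variable {T : Matrix (Fin 2) (Fin 2) ℤ}

theorem exists_isUnit_det_mulVec (hdet : T.det = 1) (ht : |T.trace| ≤ 1) :
    ∃ v, IsUnit (of ![v, T *ᵥ v]).det := by
  have ht2 : T.trace ^ 2 ≤ 1 := (sq_le_one_iff_abs_le_one _).mpr ht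
  rw [trace_fin_two] at ht2
  rw [det_fin_two] at hdet
  -- `det (v, T v)` is a binary quadratic form in `v` of discriminant `tr T ^ 2 - 4`
  obtain ⟨x, y, h⟩ := exists_qdval_eq_one_or_neg_one (A := T 1 0) (B := T 1 1 - T 0 0)
    (C := -T 0 1) (by nlinarith) (by nlinarith)
  refine ⟨![x, y], Int.isUnit_iff.mpr ?_⟩
  simp only [det_of_fin_two, mulVec_fin_two_apply, cons_val_zero, cons_val_one, cons_val_fin_one]
  simp only [qdval] at h
  rcases h with h | h
  · left; linear_combination h
  · right; linear_combination h

theorem exists_ne_zero_mulVec_eq_self (hdet : T.det = -1) (ht : T.trace = 0) :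
    ∃ u ≠ 0, T *ᵥ u = u := by
  have hT2 : T * T = 1 := by
    have := pow_succ_eq_lucasU T 1
    simpa [lucasU, ht, hdet, sq] using this
  have hT1 : T + 1 ≠ 0 := fun h => by
    rw [eq_neg_of_add_eq_zero_left h, det_neg, det_one] at hdet
    norm_num at hdet
  -- the columns of `T + 1` are fixed by `T` because `T * (T + 1) = T + 1`
  obtain ⟨j, hj⟩ : ∃ j, (T + 1) *ᵥ Pi.single j 1 ≠ 0 := by
    by_contra! h
    exact hT1 (ext_of_mulVec_single fun j => by rw [h j, zero_mulVec])
  refine ⟨_, hj, ?_⟩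
  rw [mulVec_mulVec, mul_add, hT2, mul_one, add_comm]

theorem exists_isCoprime_smul_eq {u : Fin 2 → ℤ} (hu : u ≠ 0) :
    ∃ g : ℤ, g ≠ 0 ∧ ∃ v : Fin 2 → ℤ, IsCoprime (v 0) (v 1) ∧ u = g • v := by
  have hpos : 0 < Int.gcd (u 0) (u 1) := by
    refine Int.gcd_pos_iff.mpr (by_contra fun h => hu ?_)
    push Not at h
    exact funext (Fin.forall_fin_two.mpr h)
  obtain ⟨g, m, n, hg, hmn, h0, h1⟩ := Int.exists_gcd_one' hpos
  refine ⟨g, by omega, ![m, n], Int.isCoprime_iff_gcd_eq_one.mpr hmn, ?_⟩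
  exact funext (Fin.forall_fin_two.mpr ⟨by simp [h0, mul_comm], by simp [h1, mul_comm]⟩)

theorem exists_basis_of_det_eq_neg_one (hdet : T.det = -1) (ht : T.trace = 0) :
    ∃ v w : Fin 2 → ℤ, ∃ ρ : ℤ, (ρ = 0 ∨ ρ = 1) ∧ (of ![v, w]).det = 1 ∧
      T *ᵥ v = v ∧ T *ᵥ w = ρ • v - w := by
  obtain ⟨u, hu0, hu⟩ := exists_ne_zero_mulVec_eq_self hdet ht
  obtain ⟨g, hg, v, ⟨m, n, hmn⟩, rfl⟩ := exists_isCoprime_smul_eq hu0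
  have hv : T *ᵥ v = v := smul_right_injective _ hg ((mulVec_smul T g v).symm.trans hu)
  set w₀ : Fin 2 → ℤ := ![-n, m]
  have hvw₀ : (of ![v, w₀]).det = 1 := by
    simp only [det_of_fin_two, w₀, cons_val_zero, cons_val_one, cons_val_fin_one]
    linear_combination hmn
  -- `det (v, T w₀) = det (T v, T w₀) = det T`, so `T w₀ ≡ -w₀` modulo `v`
  have hTw₀ : T *ᵥ w₀ = (of ![T *ᵥ w₀, w₀]).det • v - w₀ := by
    have hd : (of ![v, T *ᵥ w₀]).det = -1 := by
      conv_lhs => rw [← hv]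
      rw [det_of_mulVec, hdet, hvw₀]
      ring
    have h := eq_det_smul_add_det_smul hvw₀ (T *ᵥ w₀)
    rwa [hd, neg_one_smul, ← sub_eq_add_neg] at h
  obtain ⟨k, ρ, hρ, hα⟩ : ∃ k ρ : ℤ, (ρ = 0 ∨ ρ = 1) ∧ (of ![T *ᵥ w₀, w₀]).det = 2 * k + ρ :=
    ⟨_, _, Int.emod_two_eq_zero_or_one _, (Int.mul_ediv_add_emod _ 2).symm⟩
  refine ⟨v, w₀ - k • v, ρ, hρ, ?_, hv, ?_⟩
  · rw [det_of_fin_two] at hvw₀ ⊢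
    simp only [Pi.sub_apply, Pi.smul_apply, smul_eq_mul]
    linear_combination hvw₀
  · rw [mulVec_sub, mulVec_smul, hv, hTw₀, hα]
    module

end Involution

section Classification

open QuadraticMap

variable {a b c : ℤ} {T : Matrix (Fin 2) (Fin 2) ℤ} {ε : ℤ}

theorem polar_mulVec_self_eq_trace_mul (hdet : T.det = 1)
    (hT : ∀ v, qform a b c (T *ᵥ v) = qform a b c v) (v : Fin 2 → ℤ) :
    polar (qform a b c) v (T *ᵥ v) = T.trace * qform a b c v := by
  have h := polar_mulVec (ε := 1) (by simpa using hT) v (T *ᵥ v)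
  rw [mulVec_mulVec_self, hdet, one_smul, polar_sub_right, polar_smul_right, polar_self,
    polar_comm _ (T *ᵥ v) v, hT, smul_eq_mul, nsmul_eq_mul, Nat.cast_ofNat] at h
  linarith

theorem quadEquiv_of_det_eq_one (hprim : Int.gcd (Int.gcd a b) c = 1) (hdet : T.det = 1)
    (ht : |T.trace| ≤ 1) (hε : IsUnit ε) (hT : ∀ v, qform a b c (T *ᵥ v) = ε * qform a b c v) :
    quadEquiv a b c 1 0 1 ∨ quadEquiv a b c 1 1 1 ∨ ∃ a' b', quadEquiv a b c a' b' (-a') := by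
  obtain ⟨v, hv⟩ := exists_isUnit_det_mulVec hdet ht
  rcases Int.isUnit_iff.mp hε with rfl | rfl
  · simp only [one_mul] at hT
    have hP := polar_mulVec_self_eq_trace_mul hdet hT v
    have hA : IsUnit (qform a b c v) :=
      isUnit_of_dvd_basis hprim hv dvd_rfl (hP ▸ dvd_mul_left _ _) (hT v ▸ dvd_rfl)
    obtain h0 | h1 : T.trace = 0 ∨ T.trace * T.trace = 1 := by
      have := abs_le.mp ht
      rcases (by omega : T.trace = -1 ∨ T.trace = 0 ∨ T.trace = 1) with h | h | h <;> simp [h]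
    · exact Or.inl (quadEquiv_of_basis hv hA (mul_one _).symm (by rw [hP, h0]; ring)
        (by rw [hT]; ring))
    -- for `tr T = ±1` the basis `(v, tr T • T v)` turns `±(1, tr T, 1)` into `±(1, 1, 1)`
    refine Or.inr (Or.inl (quadEquiv_of_basis (w := T.trace • T *ᵥ v) ?_ hA (mul_one _).symm ?_ ?_))
    · have hdet' : (of ![v, T.trace • T *ᵥ v]).det = T.trace * (of ![v, T *ᵥ v]).det := by
        simp only [det_of_fin_two, Pi.smul_apply, smul_eq_mul]
        ring
      rw [hdet']
      exact (IsUnit.of_mul_eq_one _ h1).mul hv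
    · rw [polar_smul_right, hP, smul_eq_mul, ← mul_assoc, h1]
      ring
    · rw [QuadraticMap.map_smul, hT, smul_eq_mul, h1, one_mul, mul_one]
  · exact Or.inr (Or.inr ⟨_, _, quadEquiv_of_basis hv isUnit_one (one_mul _).symm
      (one_mul _).symm (by rw [hT]; ring)⟩)

theorem quadEquiv_of_mulVec_eq_self_of_mulVec_eq_neg (hprim : Int.gcd (Int.gcd a b) c = 1)
    {v w : Fin 2 → ℤ} (hvw : IsUnit (of ![v, w]).det) (hv : T *ᵥ v = v) (hw : T *ᵥ w = -w)
    (hε : IsUnit ε) (hT : ∀ v, qform a b c (T *ᵥ v) = ε * qform a b c v) :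
    quadEquiv a b c 0 1 0 ∨ ∃ a' c', quadEquiv a b c a' 0 c' := by
  rcases Int.isUnit_iff.mp hε with rfl | rfl
  · have hB : polar (qform a b c) v w = 0 := by
      have := polar_mulVec hT v w
      rw [hv, hw, polar_neg_right] at this
      linarith
    exact Or.inr ⟨_, _, quadEquiv_of_basis hvw isUnit_one (one_mul _).symm
      (by rw [hB]; ring) (one_mul _).symm⟩
  · have hA : qform a b c v = 0 := by
      have := hT v
      rw [hv] at this
      linarith
    have hC : qform a b c w = 0 := by
      have := hT w
      rw [hw, QuadraticMap.map_neg] at this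
      linarith
    have hB : IsUnit (polar (qform a b c) v w) :=
      isUnit_of_dvd_basis hprim hvw (hA ▸ dvd_zero _) dvd_rfl (hC ▸ dvd_zero _)
    exact Or.inl (quadEquiv_of_basis hvw hB (by rw [hA]; ring) (mul_one _).symm
      (by rw [hC]; ring))

theorem quadEquiv_of_mulVec_mulVec_eq_self (hprim : Int.gcd (Int.gcd a b) c = 1)
    {w : Fin 2 → ℤ} (hw : IsUnit (of ![w, T *ᵥ w]).det) (hTTw : T *ᵥ (T *ᵥ w) = w)
    (hε : IsUnit ε) (hT : ∀ v, qform a b c (T *ᵥ v) = ε * qform a b c v) :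
    quadEquiv a b c 1 0 (-1) ∨ ∃ a' b', quadEquiv a b c a' b' a' := by
  rcases Int.isUnit_iff.mp hε with rfl | rfl
  · exact Or.inr ⟨_, _, quadEquiv_of_basis hw isUnit_one (one_mul _).symm (one_mul _).symm
      (hT w)⟩
  · have hB : polar (qform a b c) w (T *ᵥ w) = 0 := by
      have := polar_mulVec hT w (T *ᵥ w)
      rw [hTTw, polar_comm] at this
      linarith
    have hA : IsUnit (qform a b c w) :=
      isUnit_of_dvd_basis hprim hw dvd_rfl (hB ▸ dvd_zero _) (hT w ▸ dvd_mul_left _ _)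
    exact Or.inl (quadEquiv_of_basis hw hA (mul_one _).symm (by rw [hB]; ring)
      (by rw [hT]; ring))

theorem quadEquiv_of_det_eq_neg_one (hprim : Int.gcd (Int.gcd a b) c = 1) (hdet : T.det = -1)
    (ht : T.trace = 0) (hε : IsUnit ε) (hT : ∀ v, qform a b c (T *ᵥ v) = ε * qform a b c v) :
    quadEquiv a b c 0 1 0 ∨ quadEquiv a b c 1 0 (-1) ∨ (∃ a' c', quadEquiv a b c a' 0 c') ∨
      ∃ a' b', quadEquiv a b c a' b' a' := by
  obtain ⟨v, w, ρ, hρ, hvw, hv, hw⟩ := exists_basis_of_det_eq_neg_one hdet ht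
  rcases hρ with rfl | rfl
  · rw [zero_smul, zero_sub] at hw
    rcases quadEquiv_of_mulVec_eq_self_of_mulVec_eq_neg hprim (hvw ▸ isUnit_one) hv hw hε hT
      with h | h
    · exact Or.inl h
    · exact Or.inr (Or.inr (Or.inl h))
  · rw [one_smul] at hw
    have hw' : IsUnit (of ![w, T *ᵥ w]).det := by
      rw [hw, det_of_fin_two, Int.isUnit_iff]
      rw [det_of_fin_two] at hvw
      simp only [Pi.sub_apply]
      right
      linear_combination -hvw
    have hTTw : T *ᵥ (T *ᵥ w) = w := by
      rw [hw, mulVec_sub, hv, hw]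
      abel
    rcases quadEquiv_of_mulVec_mulVec_eq_self hprim hw' hTTw hε hT with h | h
    · exact Or.inr (Or.inl h)
    · exact Or.inr (Or.inr (Or.inr h))

end Classification

theorem finite_order_in_orthogonal_group_general (a b c : ℤ)
    (hprim : Int.gcd (Int.gcd a b) c = 1)
    (t1 t2 t3 t4 : ℤ)
    (hO : (∀ x y : ℤ, qdval a b c (t1*x + t2*y) (t3*x + t4*y) = qdval a b c x y) ∨
          (∀ x y : ℤ, qdval a b c (t1*x + t2*y) (t3*x + t4*y) = -qdval a b c x y))
    (hne1 : (!![t1, t2; t3, t4] : Matrix (Fin 2) (Fin 2) ℤ) ≠ 1)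
    (hne2 : (!![t1, t2; t3, t4] : Matrix (Fin 2) (Fin 2) ℤ) ≠ -1)
    (hfin : ∃ n : ℕ, 0 < n ∧ (!![t1, t2; t3, t4] : Matrix (Fin 2) (Fin 2) ℤ)^n = 1) :
    (t1*t4 - t2*t3 = 1 →
      quadEquiv a b c 1 0 1 ∨ quadEquiv a b c 1 1 1 ∨
      ∃ a' b' : ℤ, quadEquiv a b c a' b' (-a')) ∧
    (t1*t4 - t2*t3 = -1 →
      quadEquiv a b c 0 1 0 ∨ quadEquiv a b c 1 0 (-1) ∨
      (∃ a' c' : ℤ, quadEquiv a b c a' 0 c') ∨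
      (∃ a' b' : ℤ, quadEquiv a b c a' b' a')) := by
  obtain ⟨n, hn, hpow⟩ := hfin
  obtain ⟨ε, hε, hT⟩ : ∃ ε : ℤ, IsUnit ε ∧
      ∀ v, qform a b c (!![t1, t2; t3, t4] *ᵥ v) = ε * qform a b c v := by
    rcases hO with h | h
    · exact ⟨1, isUnit_one, fun v => by simp [qform_apply, vecHead, vecTail, h]⟩
    · exact ⟨-1, isUnit_one.neg, fun v => by simp [qform_apply, vecHead, vecTail, h]⟩
  refine ⟨fun hd => ?_, fun hd => ?_⟩
  · have hdet : det !![t1, t2; t3, t4] = 1 := by rw [det_fin_two_of, hd]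
    exact quadEquiv_of_det_eq_one hprim hdet
      (abs_trace_le_one_of_pow_eq_one hdet hne1 hne2 hn hpow) hε hT
  · have hdet : det !![t1, t2; t3, t4] = -1 := by rw [det_fin_two_of, hd]
    exact quadEquiv_of_det_eq_neg_one hprim hdet (trace_eq_zero_of_pow_eq_one hdet hn hpow) hε hT

theorem finite_order_in_orthogonal_group (a b c : ℤ)
    (hprim : Int.gcd (Int.gcd a b) c = 1) (hdisc : b^2 - 4*a*c ≠ 0) (ha : 0 < a)
    (t1 t2 t3 t4 : ℤ)
    (hdet : t1*t4 - t2*t3 = 1 ∨ t1*t4 - t2*t3 = -1)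
    (hO : (∀ x y : ℤ, qdval a b c (t1*x + t2*y) (t3*x + t4*y) = qdval a b c x y) ∨
          (∀ x y : ℤ, qdval a b c (t1*x + t2*y) (t3*x + t4*y) = -qdval a b c x y))
    (hne1 : (!![t1, t2; t3, t4] : Matrix (Fin 2) (Fin 2) ℤ) ≠ 1)
    (hne2 : (!![t1, t2; t3, t4] : Matrix (Fin 2) (Fin 2) ℤ) ≠ -1)
    (hfin : ∃ n : ℕ, 0 < n ∧ (!![t1, t2; t3, t4] : Matrix (Fin 2) (Fin 2) ℤ)^n = 1) :
    (t1*t4 - t2*t3 = 1 →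
      quadEquiv a b c 1 0 1 ∨ quadEquiv a b c 1 1 1 ∨
      ∃ a' b' : ℤ, quadEquiv a b c a' b' (-a')) ∧
    (t1*t4 - t2*t3 = -1 →
      quadEquiv a b c 0 1 0 ∨ quadEquiv a b c 1 0 (-1) ∨
      (∃ a' c' : ℤ, quadEquiv a b c a' 0 c') ∨
      (∃ a' b' : ℤ, quadEquiv a b c a' b' a')) :=
  finite_order_in_orthogonal_group_general a b c hprim t1 t2 t3 t4 hO hne1 hne2 hfin
end
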